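/- arXiv:1608.07890 — 8 statements merged into one kernel-verified Lean document; each statement's English description precedes it below -/
import Mathlib

section
/- Let n be a nonnegative integer, S = {(i,j) ∈ ℕ² : i + j ≤ n}, and let x₀,…,xₙ, y₀,…,yₙ be elements of a field (or indeterminates over ℚ). Consider the square matrix A of size (n+1)(n+2)/2 indexed by pairs (i,j),(k,l) ∈ S with entries A_{(i,j),(k,l)} = C(x_i, k)·C(y_j, l), where C(x,k) = x(x−1)⋯(x−k+1)/k! is the generalized binomial coefficient. Then det A = [∏_{0≤i<i'≤n} (x_i − x_{i'})^{n+1−i'} · ∏_{0≤j<j'≤n} (y_j − y_{j'})^{n+1−j'}] / [∏_{0≤i<i'≤n} (i − i')^{n+1−i'} · ∏_{0≤j<j'≤n} (j − j')^{n+1−j'}]. -/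
open Finset Polynomial

/-- Generalized binomial coefficient `C(x,k) = x(x-1)⋯(x-k+1)/k!` in a field. -/
noncomputable def gbinom {F : Type*} [Field F] (x : F) (k : ℕ) : F :=
  (∏ m ∈ Finset.range k, (x - m)) / (Nat.factorial k)

section helpers

lemma det_tri {R : Type*} [CommRing R] {m : Type*} [DecidableEq m] [Fintype m]
    (M : Matrix m m R) (w : m → ℕ) (hw : Function.Injective w)
    (h : ∀ p q, w p < w q → M p q = 0) : M.det = ∏ p, M p p := by
  letI : LinearOrder m := LinearOrder.lift' w hw
  refine Matrix.det_of_lowerTriangular M (fun p q hlt => h p q ?_)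
  exact hlt

lemma poly_expand {F : Type*} [Field F] (p : ℕ → Polynomial F) (hm : ∀ k, (p k).Monic)
    (hd : ∀ k, (p k).natDegree = k) :
    ∀ (N : ℕ) (f : Polynomial F), f.degree < N →
      ∃ a : ℕ → F, f = ∑ k ∈ range N, Polynomial.C (a k) * p k := by
  intro N
  induction N with
  | zero =>
    intro f hf
    exact ⟨0, by simpa using Nat.WithBot.lt_zero_iff.mp hf⟩
  | succ N ih =>
    intro f hf
    set g : Polynomial F := f - Polynomial.C (f.coeff N) * p N with hg
    have h2 : (p N).degree ≤ (N : WithBot ℕ) := by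
      simpa [hd N] using Polynomial.degree_le_natDegree (p := p N)
    have hdegp : (Polynomial.C (f.coeff N) * p N).degree ≤ (N : WithBot ℕ) := by
      by_cases hc : f.coeff N = 0
      · simp [hc]
      · rwa [Polynomial.degree_C_mul hc]
    have hgdeg : g.degree < N := by
      rw [degree_lt_iff_coeff_zero]
      intro m hmN
      rcases eq_or_lt_of_le hmN with h | h
      · have hm' : m = N := by exact_mod_cast h.symm
        subst hm'
        simp only [hg, coeff_sub, coeff_C_mul]
        have hc1 : (p m).coeff m = 1 := by
          have := (hm m).coeff_natDegree
          rwa [hd m] at this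
        simp [hc1]
      · have hNm : (N : WithBot ℕ) < (m : WithBot ℕ) := by exact_mod_cast h
        have h1 : f.coeff m = 0 := coeff_eq_zero_of_degree_lt
          (lt_of_lt_of_le hf (by exact_mod_cast Nat.succ_le_of_lt (by exact_mod_cast hNm)))
        have h2' : (Polynomial.C (f.coeff N) * p N).coeff m = 0 :=
          coeff_eq_zero_of_degree_lt (lt_of_le_of_lt hdegp hNm)
        simp [hg, h1, h2']
    obtain ⟨a, ha⟩ := ih g hgdeg
    refine ⟨Function.update a N (f.coeff N), ?_⟩
    rw [Finset.sum_range_succ, Function.update_self]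
    have hsum : ∑ k ∈ range N, Polynomial.C (Function.update a N (f.coeff N) k) * p k
        = ∑ k ∈ range N, Polynomial.C (a k) * p k := by
      apply Finset.sum_congr rfl
      intro k hk
      rw [Function.update_of_ne (Nat.ne_of_lt (mem_range.mp hk))]
    rw [hsum, ← ha, hg]
    ring

lemma exists_gbinom_coeff {F : Type*} [Field F] [CharZero F] (x : ℕ → F) :
    ∃ c : ℕ → ℕ → F, (∀ k, c k k = (Nat.factorial k : F)⁻¹) ∧
      (∀ k k', k < k' → c k k' = 0) ∧
      ∀ k z, gbinom z k = ∑ k' ∈ range (k+1), c k k' * ∏ m ∈ range k', (z - x m) := by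
  set P : ℕ → Polynomial F := fun k => ∏ m ∈ range k, (Polynomial.X - Polynomial.C (x m)) with hP
  have hPm : ∀ k, (P k).Monic := fun k => monic_prod_of_monic _ _ (fun m _ => monic_X_sub_C _)
  have hPd : ∀ k, (P k).natDegree = k := by
    intro k
    rw [hP]
    simp only
    rw [Polynomial.natDegree_prod_of_monic _ _ (fun m _ => monic_X_sub_C _)]
    simp [Polynomial.natDegree_X_sub_C]
  have hPe : ∀ k z, (P k).eval z = ∏ m ∈ range k, (z - x m) := by
    intro k z; simp [hP, Polynomial.eval_prod]
  set G : ℕ → Polynomial F := fun k =>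
    Polynomial.C ((Nat.factorial k : F)⁻¹) * ∏ m ∈ range k, (Polynomial.X - Polynomial.C (m : F))
    with hG
  have hfac : ∀ k, (Nat.factorial k : F) ≠ 0 := fun k => Nat.cast_ne_zero.mpr (Nat.factorial_ne_zero k)
  have hGe : ∀ k z, (G k).eval z = gbinom z k := by
    intro k z
    simp [hG, Polynomial.eval_prod, gbinom, div_eq_inv_mul]
  have key : ∀ k, ∃ a : ℕ → F, ∀ z,
      gbinom z k = (Nat.factorial k : F)⁻¹ * ∏ m ∈ range k, (z - x m)
        + ∑ k' ∈ range k, a k' * ∏ m ∈ range k', (z - x m) := by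
    intro k
    set f : Polynomial F := G k - Polynomial.C ((Nat.factorial k : F)⁻¹) * P k with hf
    have hinv : ((Nat.factorial k : F)⁻¹ : F) ≠ 0 := inv_ne_zero (hfac k)
    have hQm : (∏ m ∈ range k, (Polynomial.X - Polynomial.C (m : F))).Monic :=
      monic_prod_of_monic _ _ (fun m _ => monic_X_sub_C _)
    have hQd : (∏ m ∈ range k, (Polynomial.X - Polynomial.C (m : F))).natDegree = k := by
      rw [Polynomial.natDegree_prod_of_monic _ _ (fun m _ => monic_X_sub_C _)]
      rw [Finset.sum_congr rfl (fun m (_ : m ∈ range k) => Polynomial.natDegree_X_sub_C ((m:F)))]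
      simp
    have hQd' : (∏ m ∈ range k, (Polynomial.X - Polynomial.C (m : F))).degree = (k : WithBot ℕ) := by
      rw [Polynomial.degree_eq_natDegree hQm.ne_zero, hQd]
    have hPdeg : (P k).degree = (k : WithBot ℕ) := by
      rw [Polynomial.degree_eq_natDegree (hPm k).ne_zero, hPd k]
    have hGdeg : (G k).degree = (k : WithBot ℕ) := by
      rw [hG]; simp only; rw [Polynomial.degree_C_mul hinv, hQd']
    have hCPdeg : (Polynomial.C ((Nat.factorial k : F)⁻¹) * P k).degree = (k : WithBot ℕ) := by
      rw [Polynomial.degree_C_mul hinv, hPdeg]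
    have hGne : G k ≠ 0 := by
      rw [hG]; simp only
      exact mul_ne_zero (Polynomial.C_ne_zero.mpr hinv) hQm.ne_zero
    have hlc : (G k).leadingCoeff = (Polynomial.C ((Nat.factorial k : F)⁻¹) * P k).leadingCoeff := by
      rw [hG]; simp only
      rw [Polynomial.leadingCoeff_mul, Polynomial.leadingCoeff_mul,
        Polynomial.leadingCoeff_C, hQm.leadingCoeff, (hPm k).leadingCoeff]
    have hdegf : f.degree < (k : WithBot ℕ) := by
      rw [hf, ← hGdeg]
      exact Polynomial.degree_sub_lt (hGdeg.trans hCPdeg.symm) hGne hlc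
    obtain ⟨a, ha⟩ := poly_expand P hPm hPd k f hdegf
    refine ⟨a, fun z => ?_⟩
    have : G k = Polynomial.C ((Nat.factorial k : F)⁻¹) * P k + f := by rw [hf]; ring
    have h2 := congrArg (Polynomial.eval z) this
    rw [hGe k z] at h2
    rw [h2]
    simp [ha, Polynomial.eval_finset_sum, hPe]
  choose a ha using key
  refine ⟨fun k => Function.update (fun k' => if k' < k then a k k' else 0) k (Nat.factorial k : F)⁻¹,
    fun k => by simp, fun k k' h => ?_, fun k z => ?_⟩
  · beta_reduce
    rw [Function.update_of_ne (Nat.ne_of_gt h)]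
    simp [Nat.lt_asymm h]
  · beta_reduce
    rw [Finset.sum_range_succ, Function.update_self, ha k z, add_comm]
    congr 1
    apply Finset.sum_congr rfl
    intro k' hk'
    have h1 : k' < k := mem_range.mp hk'
    rw [Function.update_of_ne (Nat.ne_of_lt h1), if_pos h1]

-- counting lemma
lemma card_filter_add_le (n k : ℕ) (hk : k ≤ n) :
    (Finset.univ.filter (fun l : Fin (n+1) => k + (l : ℕ) ≤ n)).card = n + 1 - k := by
  have : Finset.univ.filter (fun l : Fin (n+1) => k + (l : ℕ) ≤ n)
      = Finset.Iic (⟨n - k, by omega⟩ : Fin (n+1)) := by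
    ext l
    simp [Fin.le_def]
    omega
  rw [this, Fin.card_Iic]
  simp
  omega

-- product over the staircase subtype
lemma prod_S {F : Type*} [CommMonoid F] (n : ℕ) (f g : ℕ → F) :
    ∏ p : {p : Fin (n+1) × Fin (n+1) // (p.1 : ℕ) + (p.2 : ℕ) ≤ n},
        (f (p.1.1 : ℕ) * g (p.1.2 : ℕ))
      = (∏ k ∈ range (n+1), f k ^ (n+1-k)) * ∏ l ∈ range (n+1), g l ^ (n+1-l) := by
  classical
  have h1 : ∏ p : {p : Fin (n+1) × Fin (n+1) // (p.1 : ℕ) + (p.2 : ℕ) ≤ n},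
        (f (p.1.1 : ℕ) * g (p.1.2 : ℕ))
      = ∏ a ∈ Finset.univ.filter (fun p : Fin (n+1) × Fin (n+1) => (p.1 : ℕ) + (p.2 : ℕ) ≤ n),
          (f (a.1 : ℕ) * g (a.2 : ℕ)) := by
    exact (Finset.prod_subtype _ (fun a => by simp)
      (fun a : Fin (n+1) × Fin (n+1) => f (a.1 : ℕ) * g (a.2 : ℕ))).symm
  rw [h1, Finset.prod_mul_distrib]
  congr 1
  · -- ∏ over filter of f a.1
    rw [Finset.prod_filter]
    rw [Fintype.prod_prod_type]
    have : ∀ k : Fin (n+1), (∏ l : Fin (n+1), if (k : ℕ) + (l : ℕ) ≤ n then f (k : ℕ) else 1)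
        = f (k : ℕ) ^ (n + 1 - (k : ℕ)) := by
      intro k
      rw [← Finset.prod_filter, Finset.prod_const, card_filter_add_le n k (by omega)]
    rw [Finset.prod_congr rfl (fun k _ => this k)]
    rw [← Fin.prod_univ_eq_prod_range (fun k => f k ^ (n+1-k)) (n+1)]
  · rw [Finset.prod_filter, Fintype.prod_prod_type]
    have : ∀ k : Fin (n+1), (∏ l : Fin (n+1), if (k : ℕ) + (l : ℕ) ≤ n then g (l : ℕ) else 1)
        = ∏ l : Fin (n+1), if (l : ℕ) + (k : ℕ) ≤ n then g (l : ℕ) else 1 := by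
      intro k; apply Finset.prod_congr rfl; intro l _; rw [Nat.add_comm]
    rw [Finset.prod_congr rfl (fun k _ => this k), Finset.prod_comm]
    have h2 : ∀ l : Fin (n+1), (∏ k : Fin (n+1), if (l : ℕ) + (k : ℕ) ≤ n then g (l : ℕ) else 1)
        = g (l : ℕ) ^ (n + 1 - (l : ℕ)) := by
      intro l
      rw [← Finset.prod_filter, Finset.prod_const, card_filter_add_le n l (by omega)]
    rw [Finset.prod_congr rfl (fun l _ => h2 l)]
    rw [← Fin.prod_univ_eq_prod_range (fun l => g l ^ (n+1-l)) (n+1)]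

lemma prod_cast_fact {F : Type*} [Field F] [CharZero F] (k : ℕ) :
    (∏ i ∈ range k, ((k : F) - (i : F))) = (Nat.factorial k : F) := by
  have h1 : ∀ i ∈ range k, ((k : F) - (i : F)) = ((k - i : ℕ) : F) := by
    intro i hi
    rw [Nat.cast_sub (le_of_lt (mem_range.mp hi))]
  rw [Finset.prod_congr rfl h1, ← Nat.cast_prod]
  congr 1
  have h2 := Finset.prod_range_reflect (fun i => k - i) k
  rw [← h2]
  rw [Finset.prod_congr rfl (fun j hj => show k - (k - 1 - j) = j + 1 by
    have := mem_range.mp hj; omega)]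
  exact Finset.prod_range_add_one_eq_factorial k

end helpers

lemma sign_extract {F : Type*} [CommRing F] (N : ℕ) (e : ℕ → ℕ) (v : ℕ → ℕ → F) :
    ∏ i' ∈ range N, ∏ i ∈ range i', (- v i' i) ^ (e i')
    = (∏ i' ∈ range N, (-1 : F) ^ (e i' * i')) * ∏ i' ∈ range N, ∏ i ∈ range i', (v i' i) ^ (e i') := by
  rw [← Finset.prod_mul_distrib]
  apply Finset.prod_congr rfl
  intro i' _
  calc ∏ i ∈ range i', (- v i' i) ^ (e i')
      = ∏ i ∈ range i', ((-1 : F) ^ (e i') * (v i' i) ^ (e i')) :=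
        Finset.prod_congr rfl (fun i _ => by rw [neg_pow])
    _ = (∏ _i ∈ range i', (-1 : F) ^ (e i')) * ∏ i ∈ range i', (v i' i) ^ (e i') :=
        Finset.prod_mul_distrib
    _ = (-1 : F) ^ (e i' * i') * ∏ i ∈ range i', (v i' i) ^ (e i') := by
        rw [Finset.prod_const, Finset.card_range, ← pow_mul]


lemma prod_sub_transform {F : Type*} [CommRing F] (N : ℕ) (e : ℕ → ℕ) (u : ℕ → F) :
    ∏ i' ∈ range N, ∏ i ∈ range i', (u i - u i') ^ (e i')
    = (∏ i' ∈ range N, (-1 : F) ^ (e i' * i')) *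
      ∏ i' ∈ range N, (∏ i ∈ range i', (u i' - u i)) ^ (e i') := by
  have h0 : ∀ i' ∈ range N, ∏ i ∈ range i', (u i - u i') ^ (e i')
      = ∏ i ∈ range i', (- (u i' - u i)) ^ (e i') :=
    fun i' _ => Finset.prod_congr rfl (fun i _ => by rw [neg_sub])
  rw [Finset.prod_congr rfl h0, sign_extract N e (fun i' i => u i' - u i)]
  congr 1
  exact Finset.prod_congr rfl (fun i' _ => Finset.prod_pow _ _ _)

set_option maxHeartbeats 1000000 in
theorem stmt0 {F : Type*} [Field F] [CharZero F] (n : ℕ) (x y : ℕ → F) :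
    Matrix.det (Matrix.of
      (fun p q : {p : Fin (n+1) × Fin (n+1) // (p.1 : ℕ) + (p.2 : ℕ) ≤ n} =>
        gbinom (x (p.1.1 : ℕ)) (q.1.1 : ℕ) * gbinom (y (p.1.2 : ℕ)) (q.1.2 : ℕ)))
    = ((∏ i' ∈ Finset.range (n+1), ∏ i ∈ Finset.range i', (x i - x i') ^ (n + 1 - i')) *
       (∏ j' ∈ Finset.range (n+1), ∏ j ∈ Finset.range j', (y j - y j') ^ (n + 1 - j'))) /
      ((∏ i' ∈ Finset.range (n+1), ∏ i ∈ Finset.range i', ((i : F) - (i' : F)) ^ (n + 1 - i')) *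
       (∏ j' ∈ Finset.range (n+1), ∏ j ∈ Finset.range j', ((j : F) - (j' : F)) ^ (n + 1 - j'))) := by
  classical
  obtain ⟨c, hc1, hc2, hc3⟩ := exists_gbinom_coeff x
  obtain ⟨d, hd1, hd2, hd3⟩ := exists_gbinom_coeff y
  set St := {p : Fin (n+1) × Fin (n+1) // (p.1 : ℕ) + (p.2 : ℕ) ≤ n}
  -- weight function
  set w : St → ℕ := fun p => ((p.1.1 : ℕ) + (p.1.2 : ℕ)) * (n+2) + (p.1.1 : ℕ) with hwdef
  have hw : Function.Injective w := by
    intro p q h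
    have hp1 : (p.1.1 : ℕ) < n + 2 := by omega
    have hq1 : (q.1.1 : ℕ) < n + 2 := by omega
    simp only [hwdef] at h
    have hab : (p.1.1 : ℕ) + (p.1.2 : ℕ) = (q.1.1 : ℕ) + (q.1.2 : ℕ) := by
      by_contra hne
      rcases Nat.lt_or_ge ((p.1.1:ℕ)+(p.1.2:ℕ)) ((q.1.1:ℕ)+(q.1.2:ℕ)) with hlt | hge
      · have hstep : (((p.1.1:ℕ)+(p.1.2:ℕ)) + 1) * (n+2) ≤ ((q.1.1:ℕ)+(q.1.2:ℕ)) * (n+2) :=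
          Nat.mul_le_mul_right _ hlt
        rw [add_mul, one_mul] at hstep
        omega
      · have hlt2 : ((q.1.1:ℕ)+(q.1.2:ℕ)) < ((p.1.1:ℕ)+(p.1.2:ℕ)) := by omega
        have hstep : (((q.1.1:ℕ)+(q.1.2:ℕ)) + 1) * (n+2) ≤ ((p.1.1:ℕ)+(p.1.2:ℕ)) * (n+2) :=
          Nat.mul_le_mul_right _ hlt2
        rw [add_mul, one_mul] at hstep
        omega
    rw [hab] at h
    have h1 : (p.1.1 : ℕ) = (q.1.1 : ℕ) := Nat.add_left_cancel h
    have h2 : (p.1.2 : ℕ) = (q.1.2 : ℕ) := by omega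
    apply Subtype.ext
    apply Prod.ext <;> [exact Fin.ext h1; exact Fin.ext h2]
  have hwlt : ∀ p q : St, w p < w q → (p.1.1 : ℕ) < (q.1.1 : ℕ) ∨ (p.1.2 : ℕ) < (q.1.2 : ℕ) := by
    intro p q h
    by_contra hcon
    push_neg at hcon
    have : w q ≤ w p := by
      simp only [hwdef]
      exact Nat.add_le_add (Nat.mul_le_mul_right _ (by omega)) hcon.1
    omega
  -- matrices
  set A : Matrix St St F := Matrix.of
      (fun p q : St => gbinom (x (p.1.1 : ℕ)) (q.1.1 : ℕ) * gbinom (y (p.1.2 : ℕ)) (q.1.2 : ℕ))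
    with hA
  set Mx : Matrix St St F := Matrix.of (fun p q : St =>
      (∏ m ∈ range (q.1.1 : ℕ), (x (p.1.1 : ℕ) - x m)) *
      (∏ m ∈ range (q.1.2 : ℕ), (y (p.1.2 : ℕ) - y m))) with hMx
  set Tm : Matrix St St F := Matrix.of (fun r q : St =>
      c (q.1.1 : ℕ) (r.1.1 : ℕ) * d (q.1.2 : ℕ) (r.1.2 : ℕ)) with hTm
  have hAMT : A = Mx * Tm := by
    ext p q
    rw [Matrix.mul_apply]
    have hkn : (q.1.1 : ℕ) ≤ n := by have := q.2; omega
    have hln : (q.1.2 : ℕ) ≤ n := by have := q.2; omega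
    -- the generic term
    set g : ℕ → ℕ → F := fun k' l' =>
      (c (q.1.1 : ℕ) k' * ∏ m ∈ range k', (x (p.1.1 : ℕ) - x m)) *
      (d (q.1.2 : ℕ) l' * ∏ m ∈ range l', (y (p.1.2 : ℕ) - y m)) with hg
    have hzero : ∀ k' l' : ℕ, ¬ (k' + l' ≤ n) → g k' l' = 0 := by
      intro k' l' hcon
      have : (q.1.1 : ℕ) < k' ∨ (q.1.2 : ℕ) < l' := by
        by_contra hno; push_neg at hno; have := q.2; omega
      rcases this with h | h
      · rw [hg]; simp [hc2 _ _ h]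
      · rw [hg]; simp [hd2 _ _ h]
    have hsum1 : ∑ r : St, Mx p r * Tm r q
        = ∑ a ∈ Finset.univ.filter (fun a : Fin (n+1) × Fin (n+1) => (a.1 : ℕ) + (a.2 : ℕ) ≤ n),
            g (a.1 : ℕ) (a.2 : ℕ) := by
      calc ∑ r : St, Mx p r * Tm r q = ∑ r : St, g ((r.1.1 : ℕ)) ((r.1.2 : ℕ)) :=
            Finset.sum_congr rfl (fun r _ => by
              rw [hMx, hTm, hg]; simp only [Matrix.of_apply]; ring)
        _ = _ := (Finset.sum_subtype _ (fun a => by simp)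
            (fun a : Fin (n+1) × Fin (n+1) => g (a.1 : ℕ) (a.2 : ℕ))).symm
    have hsum2 : ∑ a ∈ Finset.univ.filter (fun a : Fin (n+1) × Fin (n+1) => (a.1 : ℕ) + (a.2 : ℕ) ≤ n),
            g (a.1 : ℕ) (a.2 : ℕ)
        = ∑ k' ∈ range (n+1), ∑ l' ∈ range (n+1), g k' l' := by
      rw [Finset.sum_filter, Fintype.sum_prod_type]
      rw [← Fin.sum_univ_eq_sum_range (fun k' => ∑ l' ∈ range (n+1), g k' l') (n+1)]
      apply Finset.sum_congr rfl
      intro k _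
      rw [← Fin.sum_univ_eq_sum_range (fun l' => g (k : ℕ) l') (n+1)]
      apply Finset.sum_congr rfl
      intro l _
      by_cases hcond : (k : ℕ) + (l : ℕ) ≤ n
      · rw [if_pos hcond]
      · rw [if_neg hcond, hzero _ _ hcond]
    have hsum3 : ∑ k' ∈ range (n+1), ∑ l' ∈ range (n+1), g k' l'
        = (∑ k' ∈ range ((q.1.1 : ℕ)+1), c (q.1.1 : ℕ) k' * ∏ m ∈ range k', (x (p.1.1 : ℕ) - x m)) *
          (∑ l' ∈ range ((q.1.2 : ℕ)+1), d (q.1.2 : ℕ) l' * ∏ m ∈ range l', (y (p.1.2 : ℕ) - y m)) := by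
      rw [Finset.sum_mul_sum]
      have e1 : ∑ k' ∈ range (n+1), ∑ l' ∈ range (n+1), g k' l'
          = ∑ k' ∈ range ((q.1.1 : ℕ)+1), ∑ l' ∈ range (n+1), g k' l' := by
        symm
        apply Finset.sum_subset
        · intro a ha; rw [mem_range] at *; omega
        · intro a _ ha2
          rw [mem_range, not_lt] at ha2
          apply Finset.sum_eq_zero
          intro l' _
          rw [hg]; simp [hc2 _ _ (by omega : (q.1.1 : ℕ) < a)]
      rw [e1]
      apply Finset.sum_congr rfl
      intro k' _
      symm
      apply Finset.sum_subset
      · intro a ha; rw [mem_range] at *; omega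
      · intro a _ ha2
        rw [mem_range, not_lt] at ha2
        simp [hd2 _ _ (by omega : (q.1.2 : ℕ) < a)]
    rw [hsum1, hsum2, hsum3, ← hc3, ← hd3]
    rfl
  -- determinant of Mx
  have hdetM : Mx.det = ∏ p : St,
      ((∏ m ∈ range (p.1.1 : ℕ), (x (p.1.1 : ℕ) - x m)) *
       (∏ m ∈ range (p.1.2 : ℕ), (y (p.1.2 : ℕ) - y m))) := by
    have hz : ∀ p q, w p < w q → Mx p q = 0 := by
      intro p q hlt
      rcases hwlt p q hlt with h | h
      · rw [hMx]; simp only [Matrix.of_apply]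
        rw [Finset.prod_eq_zero (f := fun m => x (p.1.1 : ℕ) - x m) (mem_range.mpr h) (sub_self _), zero_mul]
      · rw [hMx]; simp only [Matrix.of_apply]
        rw [Finset.prod_eq_zero (f := fun m => y (p.1.2 : ℕ) - y m) (mem_range.mpr h) (sub_self _), mul_zero]
    rw [det_tri Mx w hw hz]
    rfl
  have hdetT : Tm.det = ∏ p : St,
      ((Nat.factorial (p.1.1 : ℕ) : F)⁻¹ * (Nat.factorial (p.1.2 : ℕ) : F)⁻¹) := by
    have hzT : ∀ p q, w p < w q → Tm.transpose p q = 0 := by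
      intro p q hlt
      rcases hwlt p q hlt with h | h
      · rw [hTm]; simp only [Matrix.transpose_apply, Matrix.of_apply]
        rw [hc2 _ _ h, zero_mul]
      · rw [hTm]; simp only [Matrix.transpose_apply, Matrix.of_apply]
        rw [hd2 _ _ h, mul_zero]
    have hdt : Tm.transpose.det = ∏ p : St, Tm.transpose p p := det_tri _ w hw hzT
    rw [Matrix.det_transpose] at hdt
    rw [hdt]
    apply Finset.prod_congr rfl
    intro p _
    rw [hTm]
    simp only [Matrix.transpose_apply, Matrix.of_apply]
    rw [hc1, hd1]
  have hdetA : A.det = Mx.det * Tm.det := by rw [hAMT, Matrix.det_mul]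
  -- evaluate the products over St
  have hPM : ∏ p : St,
      ((∏ m ∈ range (p.1.1 : ℕ), (x (p.1.1 : ℕ) - x m)) *
       (∏ m ∈ range (p.1.2 : ℕ), (y (p.1.2 : ℕ) - y m)))
      = (∏ k ∈ range (n+1), (∏ m ∈ range k, (x k - x m)) ^ (n+1-k)) *
        (∏ l ∈ range (n+1), (∏ m ∈ range l, (y l - y m)) ^ (n+1-l)) :=
    prod_S n (fun k => ∏ m ∈ range k, (x k - x m)) (fun l => ∏ m ∈ range l, (y l - y m))
  have hPT : ∏ p : St,
      ((Nat.factorial (p.1.1 : ℕ) : F)⁻¹ * (Nat.factorial (p.1.2 : ℕ) : F)⁻¹)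
      = (∏ k ∈ range (n+1), ((Nat.factorial k : F)⁻¹) ^ (n+1-k)) *
        (∏ l ∈ range (n+1), ((Nat.factorial l : F)⁻¹) ^ (n+1-l)) :=
    prod_S n (fun k => (Nat.factorial k : F)⁻¹) (fun l => (Nat.factorial l : F)⁻¹)
  -- abbreviations
  set Px := ∏ k ∈ range (n+1), (∏ m ∈ range k, (x k - x m)) ^ (n+1-k) with hPx
  set Py := ∏ l ∈ range (n+1), (∏ m ∈ range l, (y l - y m)) ^ (n+1-l) with hPy
  set Fx := ∏ k ∈ range (n+1), ((Nat.factorial k : F)) ^ (n+1-k) with hFx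
  set sx := ∏ i' ∈ range (n+1), (-1 : F) ^ ((n+1-i') * i') with hsx
  have hFxne : Fx ≠ 0 := by
    rw [hFx]
    apply Finset.prod_ne_zero_iff.mpr
    intro k _
    exact pow_ne_zero _ (Nat.cast_ne_zero.mpr (Nat.factorial_ne_zero k))
  have hsxne : sx ≠ 0 := by
    rw [hsx]
    apply Finset.prod_ne_zero_iff.mpr
    intro k _
    exact pow_ne_zero _ (neg_ne_zero.mpr one_ne_zero)
  have hinvFx : (∏ k ∈ range (n+1), ((Nat.factorial k : F)⁻¹) ^ (n+1-k)) = Fx⁻¹ := by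
    rw [hFx, ← Finset.prod_inv_distrib]
    exact Finset.prod_congr rfl (fun k _ => inv_pow _ _)
  -- LHS value
  have hLHS : A.det = Px * Py * (Fx⁻¹ * Fx⁻¹) := by
    rw [hdetA, hdetM, hdetT, hPM, hPT, hinvFx, hPx, hPy]
  -- RHS transforms
  have hNx : (∏ i' ∈ range (n+1), ∏ i ∈ range i', (x i - x i') ^ (n+1-i')) = sx * Px :=
    prod_sub_transform (n+1) (fun i' => n+1-i') x
  have hNy : (∏ j' ∈ range (n+1), ∏ j ∈ range j', (y j - y j') ^ (n+1-j')) = sx * Py :=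
    prod_sub_transform (n+1) (fun j' => n+1-j') y
  have hDx : (∏ i' ∈ range (n+1), ∏ i ∈ range i', ((i : F) - (i' : F)) ^ (n+1-i')) = sx * Fx := by
    have h1 : ∏ i' ∈ range (n+1), (∏ i ∈ range i', ((i' : F) - (i : F))) ^ (n+1-i') = Fx := by
      rw [hFx]
      exact Finset.prod_congr rfl (fun k _ => by rw [prod_cast_fact k])
    rw [prod_sub_transform (n+1) (fun i' => n+1-i') (fun i => (i : F)), h1]
  rw [hLHS, hNx, hNy, hDx]
  field_simp
end

section
/- Let r ≥ 1 and define the map F : ℂ^{r} × ℂˣ → ℂ^{r} × ℂˣ sending (ζ₀,…,ζ_r) (with ζ_r ≠ 0) to the tuple (λ_{r+1},…,λ_{2r+1}) where λ_i = (1/2)·∑_{j,k ∈ ℕ, j+k = i−1} ζ_j ζ_k for i = r+1,…,2r+1. Then F is surjective onto ℂ^{r} × ℂˣ, and for ζ, ζ′ in the domain, F(ζ) = F(ζ′) if and only if ζ′ = ζ or ζ′ = −ζ. -/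
/-- `λ_i = (1/2) ∑_{j+k=i-1} ζ_j ζ_k` for `ζ : ℕ → ℂ` (extended by zero). -/
noncomputable def quadMap (ζ : ℕ → ℂ) (i : ℕ) : ℂ :=
  (1/2) * ∑ j ∈ Finset.range i, ζ j * ζ (i - 1 - j)

/-- The backwards-solved sequence: `seqF c lam r m = ζ_{r-m}`. -/
noncomputable def seqF (c : ℂ) (lam : ℕ → ℂ) (r : ℕ) : ℕ → ℂ
  | 0 => c
  | m+1 => (2 * lam (2*r - m)
      - ∑ a ∈ (Finset.Ico 1 (m+1)).attach,
          seqF c lam r a.1 * seqF c lam r (m+1 - a.1)) / (2 * c)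
  termination_by m => m
  decreasing_by
  · have := a.2; simp only [Finset.mem_Ico] at this; omega
  · have := a.2; simp only [Finset.mem_Ico] at this; omega

lemma seqF_sum (c : ℂ) (hc : c ≠ 0) (lam : ℕ → ℂ) (r : ℕ)
    (hc2 : c * c = 2 * lam (2*r+1)) (m : ℕ) :
    ∑ a ∈ Finset.range (m+1), seqF c lam r a * seqF c lam r (m - a)
      = 2 * lam (2*r+1-m) := by
  cases m with
  | zero => simpa [seqF] using hc2
  | succ m =>
    set f := seqF c lam r with hf
    have hS : ∑ a ∈ Finset.range (m+2), f a * f (m+1-a)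
        = 2 * (f 0 * f (m+1)) + ∑ a ∈ Finset.Ico 1 (m+1), f a * f (m+1-a) := by
      rw [Finset.sum_range_succ, Finset.sum_range_succ']
      have h1 : ∑ a ∈ Finset.Ico 1 (m+1), f a * f (m+1-a)
          = ∑ a ∈ Finset.range m, f (a+1) * f (m+1-(a+1)) := by
        rw [Finset.sum_Ico_eq_sum_range]
        simp only [Nat.add_sub_cancel]
        refine Finset.sum_congr rfl fun a _ => ?_
        congr 1 <;> congr 1 <;> omega
      rw [h1]
      have : m + 1 - (m + 1) = 0 := by omega
      rw [this]
      simp only [Nat.sub_zero]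
      ring
    have heq : f (m+1) = (2 * lam (2*r - m)
        - ∑ a ∈ Finset.Ico 1 (m+1), f a * f (m+1-a)) / (2 * c) := by
      rw [hf]
      rw [seqF]
      rw [Finset.sum_attach (Finset.Ico 1 (m+1)) (fun a => seqF c lam r a * seqF c lam r (m+1-a))]
    have hf0 : f 0 = c := by rw [hf, seqF]
    have hidx : 2*r - m = 2*r+1-(m+1) := by omega
    rw [hS, hf0, heq, hidx]
    field_simp
    ring

theorem stmt2 (r : ℕ) (hr : 1 ≤ r) :
    (∀ lam : ℕ → ℂ, lam (2*r+1) ≠ 0 →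
      ∃ ζ : ℕ → ℂ, (∀ i, r < i → ζ i = 0) ∧ ζ r ≠ 0 ∧
        ∀ i, r + 1 ≤ i → i ≤ 2*r + 1 → quadMap ζ i = lam i) ∧
    (∀ ζ ζ' : ℕ → ℂ, (∀ i, r < i → ζ i = 0) → ζ r ≠ 0 →
      (∀ i, r < i → ζ' i = 0) → ζ' r ≠ 0 →
      ((∀ i, r + 1 ≤ i → i ≤ 2*r + 1 → quadMap ζ i = quadMap ζ' i) ↔
        (ζ' = ζ ∨ ζ' = fun i => - ζ i))) := by
  constructor
  · -- Surjectivity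
    intro lam hlam
    obtain ⟨c, hc2⟩ := IsAlgClosed.exists_pow_nat_eq (2 * lam (2*r+1)) (two_pos)
    rw [sq] at hc2
    have hc : c ≠ 0 := by
      intro h; apply hlam
      have : (2 : ℂ) * lam (2*r+1) = 0 := by rw [← hc2, h, mul_zero]
      simpa using this
    set f := seqF c lam r with hf
    refine ⟨fun i => if i ≤ r then f (r - i) else 0, ?_, ?_, ?_⟩
    · intro i hi; simp [Nat.not_le.mpr hi]
    · have : r ≤ r := le_refl r
      simp only [if_pos this, Nat.sub_self]
      rw [hf, seqF]; exact hc
    · intro i hi1 hi2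
      set ζ : ℕ → ℂ := fun i => if i ≤ r then f (r - i) else 0 with hζ
      have hzf : ∀ b, b ≤ r → ζ (r - b) = f b := by
        intro b hb
        have h1 : r - b ≤ r := by omega
        have h2 : r - (r - b) = b := by omega
        simp only [hζ, if_pos h1, h2]
      set m := 2*r+1-i with hm
      have hmr : m ≤ r := by omega
      have him : i = 2*r+1-m := by omega
      have key : ∑ j ∈ Finset.range i, ζ j * ζ (i - 1 - j)
          = ∑ a ∈ Finset.range (m+1), f a * f (m - a) := by
        have hsub : Finset.Icc (r-m) r ⊆ Finset.range i := by
          intro j hj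
          simp only [Finset.mem_Icc] at hj
          simp only [Finset.mem_range]; omega
        rw [← Finset.sum_subset hsub]
        · refine (Finset.sum_nbij' (fun a => r - a) (fun j => r - j) ?_ ?_ ?_ ?_ ?_).symm
          · intro a ha
            simp only [Finset.mem_range] at ha
            simp only [Finset.mem_Icc]; omega
          · intro j hj
            simp only [Finset.mem_Icc] at hj
            simp only [Finset.mem_range]; omega
          · intro a ha; simp only [Finset.mem_range] at ha
            show r - (r - a) = a; omega
          · intro j hj; simp only [Finset.mem_Icc] at hj
            show r - (r - j) = j; omega
          · intro a ha
            simp only [Finset.mem_range] at ha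
            show f a * f (m - a) = ζ (r - a) * ζ (i - 1 - (r - a))
            have e1 : i - 1 - (r - a) = r - (m - a) := by omega
            rw [e1, hzf a (by omega), hzf (m-a) (by omega)]
        · intro j hjr hj
          simp only [Finset.mem_range] at hjr
          simp only [Finset.mem_Icc, not_and_or, not_le] at hj
          rcases hj with hj | hj
          · have hlt : r < i - 1 - j := by omega
            simp only [hζ, if_neg (Nat.not_le.mpr hlt), mul_zero]
          · simp only [hζ, if_neg (Nat.not_le.mpr hj), zero_mul]
      rw [quadMap, key, seqF_sum c hc lam r hc2 m, ← him]
      ring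
  · -- Injectivity up to sign
    intro ζ ζ' hζ hζr hζ' hζ'r
    constructor
    · intro h
      classical
      set P : Polynomial ℂ := ∑ j ∈ Finset.range (r+1), Polynomial.C (ζ j) * Polynomial.X ^ j with hP
      set Q : Polynomial ℂ := ∑ j ∈ Finset.range (r+1), Polynomial.C (ζ' j) * Polynomial.X ^ j with hQ
      have coeffP : ∀ n, P.coeff n = ζ n := by
        intro n
        rw [hP, Polynomial.finset_sum_coeff]
        simp only [Polynomial.coeff_C_mul, Polynomial.coeff_X_pow, mul_ite, mul_one, mul_zero]
        rw [Finset.sum_ite_eq (Finset.range (r+1)) n ζ]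
        by_cases hn : n ∈ Finset.range (r+1)
        · rw [if_pos hn]
        · rw [if_neg hn]
          simp only [Finset.mem_range] at hn
          exact (hζ n (by omega)).symm
      have coeffQ : ∀ n, Q.coeff n = ζ' n := by
        intro n
        rw [hQ, Polynomial.finset_sum_coeff]
        simp only [Polynomial.coeff_C_mul, Polynomial.coeff_X_pow, mul_ite, mul_one, mul_zero]
        rw [Finset.sum_ite_eq (Finset.range (r+1)) n ζ']
        by_cases hn : n ∈ Finset.range (r+1)
        · rw [if_pos hn]
        · rw [if_neg hn]
          simp only [Finset.mem_range] at hn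
          exact (hζ' n (by omega)).symm
      have hmulP : ∀ mm : ℕ, (P*P).coeff mm = ∑ j ∈ Finset.range (mm+1), ζ j * ζ (mm - j) := by
        intro mm
        rw [Polynomial.coeff_mul, Finset.Nat.sum_antidiagonal_eq_sum_range_succ_mk]
        simp [coeffP]
      have hmulQ : ∀ mm : ℕ, (Q*Q).coeff mm = ∑ j ∈ Finset.range (mm+1), ζ' j * ζ' (mm - j) := by
        intro mm
        rw [Polynomial.coeff_mul, Finset.Nat.sum_antidiagonal_eq_sum_range_succ_mk]
        simp [coeffQ]
      have hD : ∀ mm : ℕ, r ≤ mm → (P*P - Q*Q).coeff mm = 0 := by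
        intro mm hmm
        rw [Polynomial.coeff_sub, hmulP, hmulQ]
        by_cases h2 : mm ≤ 2*r
        · have hq := h (mm+1) (by omega) (by omega)
          rw [quadMap, quadMap] at hq
          have : (∑ j ∈ Finset.range (mm+1), ζ j * ζ (mm + 1 - 1 - j))
              = ∑ j ∈ Finset.range (mm+1), ζ' j * ζ' (mm + 1 - 1 - j) := by
            have h2' : (2 : ℂ) ≠ 0 := two_ne_zero
            field_simp at hq
            exact hq
          simpa using sub_eq_zero.mpr this
        · have z1 : ∑ j ∈ Finset.range (mm+1), ζ j * ζ (mm - j) = 0 := by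
            apply Finset.sum_eq_zero
            intro j hj
            by_cases hjr : j ≤ r
            · rw [hζ (mm - j) (by omega), mul_zero]
            · rw [hζ j (by omega), zero_mul]
          have z2 : ∑ j ∈ Finset.range (mm+1), ζ' j * ζ' (mm - j) = 0 := by
            apply Finset.sum_eq_zero
            intro j hj
            by_cases hjr : j ≤ r
            · rw [hζ' (mm - j) (by omega), mul_zero]
            · rw [hζ' j (by omega), zero_mul]
          rw [z1, z2, sub_zero]
      by_cases hPQ : P - Q = 0
      · left
        funext n
        have := sub_eq_zero.mp hPQ
        rw [← coeffQ n, ← this, coeffP n]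
      · by_cases hPQ' : P + Q = 0
        · right
          funext n
          have : Q = -P := by linear_combination hPQ'
          rw [← coeffQ n, this, Polynomial.coeff_neg, coeffP n]
        · exfalso
          have hDdecomp : P*P - Q*Q = (P - Q) * (P + Q) := by ring
          have hDne : P*P - Q*Q ≠ 0 := by
            rw [hDdecomp]; exact mul_ne_zero hPQ hPQ'
          have hPdeg : P.natDegree ≤ r := by
            apply Polynomial.natDegree_le_iff_coeff_eq_zero.mpr
            intro N hN; rw [coeffP]; exact hζ N hN
          have hQdeg : Q.natDegree ≤ r := by
            apply Polynomial.natDegree_le_iff_coeff_eq_zero.mpr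
            intro N hN; rw [coeffQ]; exact hζ' N hN
          have hsum : (P - Q).coeff r + (P + Q).coeff r = 2 * ζ r := by
            rw [Polynomial.coeff_sub, Polynomial.coeff_add, coeffP, coeffQ]; ring
          have hone : r ≤ (P - Q).natDegree ∨ r ≤ (P + Q).natDegree := by
            by_cases hc1 : (P - Q).coeff r = 0
            · right
              apply Polynomial.le_natDegree_of_ne_zero
              intro hc2
              rw [hc1, hc2] at hsum
              apply hζr
              have : (2:ℂ) * ζ r = 0 := by rw [← hsum]; ring
              simpa using this
            · left; exact Polynomial.le_natDegree_of_ne_zero hc1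
          have hdeg : r ≤ (P*P - Q*Q).natDegree := by
            rw [hDdecomp, Polynomial.natDegree_mul hPQ hPQ']
            rcases hone with h1 | h1 <;> omega
          have := hD _ hdeg
          rw [← Polynomial.leadingCoeff] at this
          exact hDne (Polynomial.leadingCoeff_eq_zero.mp this)
    · intro h i hi1 hi2
      rcases h with h | h
      · rw [h]
      · rw [h, quadMap, quadMap]
        simp [neg_mul_neg]
end

section
/- Fix r ≥ 1 and λ = (λ_{r+1},…,λ_{2r+1}) ∈ ℂ^r × ℂˣ. For i with r+1 ≤ i < 2r+1, the coordinate λ_i of the quadratic map of the Heisenberg Whittaker type satisfies λ_i = ζ_r·ζ_{i−1−r} + (1/2)·∑_{j=i−r}^{r−1} ζ_j ζ_{i−1−j}. Consequently, given ζ_r with ζ_r² = 2λ_{2r+1} ≠ 0, the remaining coordinates ζ_{r−1}, ζ_{r−2}, …, ζ_0 are uniquely determined recursively by the equations λ_i = (1/2)∑_{j+k=i−1} ζ_j ζ_k for i = 2r, 2r−1, …, r+1. -/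
/-- Auxiliary: the recursively defined solution. -/
noncomputable def zetaAux (r : ℕ) (lam : ℕ → ℂ) (c : ℂ) : ℕ → ℂ
  | k =>
    if r < k then 0
    else if k = r then c
    else (lam (k+r+1) - (1/2) * ∑ j ∈ (Finset.Ico (k+1) r).attach,
        zetaAux r lam c j.1 * zetaAux r lam c (k+r-j.1)) / c
  termination_by k => r - k
  decreasing_by
  · have := j.2; simp only [Finset.mem_Ico] at this; omega
  · have := j.2; simp only [Finset.mem_Ico] at this; omega

lemma zetaAux_gt (r : ℕ) (lam : ℕ → ℂ) (c : ℂ) (k : ℕ) (hk : r < k) :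
    zetaAux r lam c k = 0 := by
  rw [zetaAux]; simp [hk]

lemma zetaAux_r (r : ℕ) (lam : ℕ → ℂ) (c : ℂ) :
    zetaAux r lam c r = c := by
  rw [zetaAux]; simp

lemma zetaAux_lt (r : ℕ) (lam : ℕ → ℂ) (c : ℂ) (k : ℕ) (hk : k < r) :
    zetaAux r lam c k = (lam (k+r+1) - (1/2) * ∑ j ∈ Finset.Ico (k+1) r,
        zetaAux r lam c j * zetaAux r lam c (k+r-j)) / c := by
  rw [zetaAux]
  rw [if_neg (by omega), if_neg (by omega)]
  rw [Finset.sum_attach (Finset.Ico (k+1) r) (fun j => zetaAux r lam c j * zetaAux r lam c (k+r-j))]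

lemma quad_expand (r : ℕ) (ζ : ℕ → ℂ) (h0 : ∀ i, r < i → ζ i = 0)
    (i : ℕ) (h1 : r + 1 ≤ i) (h2 : i < 2*r + 1) :
    quadMap ζ i = ζ r * ζ (i - 1 - r) +
      (1/2) * ∑ j ∈ Finset.Ico (i - r) r, ζ j * ζ (i - 1 - j) := by
  obtain ⟨k, hk, rfl⟩ : ∃ k, k < r ∧ i = k + r + 1 := ⟨i - r - 1, by omega, by omega⟩
  unfold quadMap
  simp only [Nat.add_sub_cancel]
  rw [show k + r + 1 - r = k + 1 from by omega]
  have hsplit : ∑ j ∈ Finset.range (k+r+1), ζ j * ζ (k+r-j)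
      = ∑ j ∈ Finset.Ico k (r+1), ζ j * ζ (k+r-j) := by
    rw [Finset.range_eq_Ico]
    refine (Finset.sum_subset ?_ ?_).symm
    · intro x hx; simp only [Finset.mem_Ico] at *; omega
    · intro x hx1 hx2
      simp only [Finset.mem_Ico] at hx1 hx2
      rcases (show r < x ∨ r < k + r - x from by omega) with h | h
      · rw [h0 x h, zero_mul]
      · rw [h0 _ h, mul_zero]
  rw [hsplit]
  have hins : Finset.Ico k (r+1) = insert k (insert r (Finset.Ico (k+1) r)) := by
    ext x; simp only [Finset.mem_Ico, Finset.mem_insert]; omega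
  rw [hins, Finset.sum_insert (by simp only [Finset.mem_insert, Finset.mem_Ico]; omega),
      Finset.sum_insert (by simp only [Finset.mem_Ico]; omega)]
  rw [show k + r - k = r from by omega, show k + r - r = k from by omega]
  ring

theorem stmt4 (r : ℕ) (hr : 1 ≤ r) :
    (∀ ζ : ℕ → ℂ, (∀ i, r < i → ζ i = 0) →
      ∀ i, r + 1 ≤ i → i < 2*r + 1 →
        quadMap ζ i = ζ r * ζ (i - 1 - r) +
          (1/2) * ∑ j ∈ Finset.Ico (i - r) r, ζ j * ζ (i - 1 - j)) ∧
    (∀ lam : ℕ → ℂ, lam (2*r+1) ≠ 0 → ∀ c : ℂ, c ^ 2 = 2 * lam (2*r+1) →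
      ∃! ζ : ℕ → ℂ, (∀ i, r < i → ζ i = 0) ∧ ζ r = c ∧
        ∀ i, r + 1 ≤ i → i ≤ 2*r + 1 → quadMap ζ i = lam i) := by
  constructor
  · exact fun ζ h0 i h1 h2 => quad_expand r ζ h0 i h1 h2
  · intro lam hlam c hc2
    have hc : c ≠ 0 := by
      intro h; rw [h] at hc2; apply hlam
      have : (2 : ℂ) * lam (2*r+1) = 0 := by rw [← hc2]; ring
      have h2 : (2 : ℂ) ≠ 0 := two_ne_zero
      exact (mul_eq_zero.1 this).resolve_left h2
    set ζ := zetaAux r lam c with hζdef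
    have hz0 : ∀ i, r < i → ζ i = 0 := fun i hi => zetaAux_gt r lam c i hi
    have hzr : ζ r = c := zetaAux_r r lam c
    refine ⟨ζ, ⟨hz0, hzr, ?_⟩, ?_⟩
    · -- existence: the equations hold
      intro i h1 h2
      rcases eq_or_lt_of_le h2 with heq | hlt
      · -- i = 2r+1
        subst heq
        unfold quadMap
        simp only [Nat.add_sub_cancel]
        rw [Finset.sum_eq_single r]
        · rw [show 2*r - r = r from by omega, hzr]
          linear_combination (1/2) * hc2
        · intro b hb hbr
          simp only [Finset.mem_range] at hb
          rcases (show r < b ∨ r < 2*r - b from by omega) with h | h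
          · rw [hz0 b h, zero_mul]
          · rw [hz0 _ h, mul_zero]
        · intro h; exact absurd (Finset.mem_range.2 (by omega)) h
      · -- r+1 ≤ i ≤ 2r
        obtain ⟨k, hk, rfl⟩ : ∃ k, k < r ∧ i = k + r + 1 := ⟨i - r - 1, by omega, by omega⟩
        rw [quad_expand r ζ hz0 _ h1 hlt]
        simp only [Nat.add_sub_cancel]
        rw [show k + r + 1 - r = k + 1 from by omega]
        rw [hzr]
        have hzk := zetaAux_lt r lam c k hk
        rw [← hζdef] at hzk
        rw [hzk]
        field_simp
        ring
    · -- uniqueness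
      intro ζ' ⟨h0', hr', heq'⟩
      have key : ∀ m k, r - k = m → ζ' k = ζ k := by
        intro m
        induction m using Nat.strong_induction_on with
        | _ m ih =>
          intro k hm
          rcases lt_trichotomy k r with hk | hk | hk
          · have hq := heq' (k+r+1) (by omega) (by omega)
            rw [quad_expand r ζ' h0' (k+r+1) (by omega) (by omega)] at hq
            simp only [Nat.add_sub_cancel] at hq
            rw [show k + r + 1 - r = k + 1 from by omega, hr'] at hq
            have hsum : ∑ j ∈ Finset.Ico (k+1) r, ζ' j * ζ' (k+r-j)
                = ∑ j ∈ Finset.Ico (k+1) r, ζ j * ζ (k+r-j) := by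
              refine Finset.sum_congr rfl fun j hj => ?_
              simp only [Finset.mem_Ico] at hj
              rw [ih (r - j) (by omega) j rfl, ih (r - (k+r-j)) (by omega) (k+r-j) rfl]
            rw [hsum] at hq
            rw [hζdef, zetaAux_lt r lam c k hk, ← hζdef, eq_div_iff hc]
            linear_combination hq
          · subst hk; rw [hr', hzr]
          · rw [h0' k hk, hz0 k hk]
      funext k
      exact key (r - k) k rfl
end

section
/- Let s ≥ 2. In the universal enveloping algebra of the Witt/Virasoro algebra acting on a module M with a vector w satisfying ω_i w = 0 for all i > s (where ω_i = L(i−1)): for integers 0 ≤ p ≤ q and i₁,…,i_p ≥ 0, i_{p+1},…,i_q < 0 with s·q ≤ i₁ + ⋯ + i_q, if p < q or some i_l with 1 ≤ l ≤ p satisfies i_l ≠ s, then ω_{i_q} ⋯ ω_{i_{p+1}} ω_{i_p} ⋯ ω_{i_1} w = 0. -/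
/-!
Negative indices act last, and as each is at most `-1` they only raise the index sum demanded of
the nonnegative ones, so some nonnegative index `x` exceeds `s`. Moving `ω x` past `ω y` with
`y ≥ 0` (so `x + y ≠ 2`: no central term) gives the word with `ω x` one place closer to `w`, which
it kills, plus a multiple of the word with `ω x, ω y` merged into `ω (x + y - 1)`. That word is one
letter shorter and its index sum is one less, so for `s ≥ 2` the sum exceeds `s` times the length,
and induction on the length applies.
-/

namespace List

lemma exists_lt_of_mul_length_lt_sum {s : ℤ} {L : List ℤ} (h : s * L.length < L.sum) :
    ∃ x ∈ L, s < x := by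
  by_contra! hle
  have := L.sum_le_card_nsmul s hle
  rw [nsmul_eq_mul, mul_comm] at this
  omega

lemma exists_lt_of_mul_length_le_sum {s : ℤ} {L : List ℤ} (h : s * L.length ≤ L.sum)
    (hne : ∃ a ∈ L, a ≠ s) : ∃ x ∈ L, s < x := by
  by_contra! hle
  obtain ⟨a, ha, has⟩ := hne
  obtain ⟨L₁, L₂, rfl⟩ := List.append_of_mem ha
  have h₁ := L₁.sum_le_card_nsmul s fun b hb => hle b (by simp [hb])
  have h₂ := L₂.sum_le_card_nsmul s fun b hb => hle b (by simp [hb])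
  have ha' : a < s := lt_of_le_of_ne (hle a (by simp)) has
  simp only [sum_append, sum_cons, length_append, length_cons, nsmul_eq_mul] at h h₁ h₂
  push_cast at h
  nlinarith

lemma mem_take_ofFn {α : Type*} {q p : ℕ} {f : Fin q → α} {a : α} :
    a ∈ (ofFn f).take p ↔ ∃ l : Fin q, (l : ℕ) < p ∧ f l = a := by
  simp only [mem_take_iff_getElem, List.getElem_ofFn, length_ofFn, lt_min_iff]
  constructor
  · rintro ⟨j, ⟨hjp, hjq⟩, rfl⟩
    exact ⟨⟨j, hjq⟩, hjp, rfl⟩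
  · rintro ⟨l, hl, rfl⟩
    exact ⟨l, ⟨hl, l.2⟩, rfl⟩

lemma mem_drop_ofFn {α : Type*} {q p : ℕ} {f : Fin q → α} {a : α} :
    a ∈ (ofFn f).drop p ↔ ∃ l : Fin q, p ≤ (l : ℕ) ∧ f l = a := by
  simp only [mem_drop_iff_getElem, List.getElem_ofFn, length_ofFn]
  constructor
  · rintro ⟨j, hj, rfl⟩
    exact ⟨_, Nat.le_add_right p j, rfl⟩
  · rintro ⟨l, hl, rfl⟩
    exact ⟨l - p, by omega, congrArg f (Fin.ext (Nat.add_sub_of_le hl))⟩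

end List

namespace Witt

variable {R M : Type*} [Ring R] [AddCommGroup M] [Module R M]

def wordProd (ω : ℤ → R) (L : List ℤ) : R := (L.reverse.map ω).prod

lemma wordProd_cons (ω : ℤ → R) (a : ℤ) (L : List ℤ) :
    wordProd ω (a :: L) = wordProd ω L * ω a := by
  simp [wordProd]

lemma wordProd_append (ω : ℤ → R) (L L' : List ℤ) :
    wordProd ω (L ++ L') = wordProd ω L' * wordProd ω L := by
  simp [wordProd]

lemma foldl_smul_eq_wordProd_smul (ω : ℤ → R) (L : List ℤ) (w : M) :
    L.foldl (fun v a => ω a • v) w = wordProd ω L • w := by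
  induction L generalizing w with
  | nil => simp [wordProd]
  | cons a L ih => rw [List.foldl_cons, ih, wordProd_cons, mul_smul]

lemma wordProd_swap {ω : ℤ → R} {x y : ℤ}
    (hxy : ω x * ω y - ω y * ω x = (x - y) • ω (x + y - 1)) (A₁ A₂ : List ℤ) :
    wordProd ω (A₁ ++ y :: x :: A₂) =
      wordProd ω (A₁ ++ x :: y :: A₂) + (x - y) • wordProd ω (A₁ ++ (x + y - 1) :: A₂) := by
  rw [sub_eq_iff_eq_add'] at hxy
  simp only [wordProd_append, wordProd_cons, mul_assoc, hxy, mul_add, add_mul,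
    mul_smul_comm, smul_mul_assoc]

theorem wordProd_smul_eq_zero_of_exists_lt {ω : ℤ → R} {s : ℤ} {w : M}
    (hcomm : ∀ i k : ℤ, i + k ≠ 2 → ω i * ω k - ω k * ω i = (i - k) • ω (i + k - 1))
    (hs : 2 ≤ s) (hw : ∀ i, s < i → ω i • w = 0) (A : List ℤ) (hA : ∀ a ∈ A, 0 ≤ a)
    (hsum : s * A.length ≤ A.sum) (hx : ∃ x ∈ A, s < x) : wordProd ω A • w = 0 := by
  induction hn : A.length using Nat.strong_induction_on generalizing A with
  | _ n ih =>
  obtain ⟨x, hxA, hx⟩ := hx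
  obtain ⟨A₁, A₂, rfl⟩ := List.append_of_mem hxA
  clear hxA
  induction A₁ using List.reverseRecOn generalizing A₂ with
  | nil => rw [List.nil_append, wordProd_cons, mul_smul, hw x hx, smul_zero]
  | append_singleton A₁ y ihA =>
    simp only [List.append_assoc, List.singleton_append] at hA hn hsum ⊢
    have hy : 0 ≤ y := hA y (by simp)
    rw [wordProd_swap (hcomm x y (by omega)), add_smul, smul_assoc]
    have hmoved : wordProd ω (A₁ ++ x :: y :: A₂) • w = 0 := by
      have hperm : (A₁ ++ x :: y :: A₂).Perm (A₁ ++ y :: x :: A₂) :=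
        (List.Perm.swap y x A₂).append_left A₁
      exact ihA (y :: A₂) (fun a ha => hA a (hperm.subset ha))
        (by rwa [hperm.length_eq, hperm.sum_eq]) (hperm.length_eq.trans hn)
    have hmerged : wordProd ω (A₁ ++ (x + y - 1) :: A₂) • w = 0 := by
      set A' := A₁ ++ (x + y - 1) :: A₂
      have hlen : A'.length + 1 = n := by
        simp only [A', ← hn, List.length_append, List.length_cons]; omega
      have hsum' : A'.sum + 1 = (A₁ ++ y :: x :: A₂).sum := by
        simp only [A', List.sum_append, List.sum_cons]; ring
      have hlt : s * A'.length < A'.sum := by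
        rw [hn, ← hlen, ← hsum'] at hsum
        push_cast at hsum
        linarith
      refine ih _ (by omega) A' (fun a ha => ?_) hlt.le
        (List.exists_lt_of_mul_length_lt_sum hlt) rfl
      simp only [A', List.mem_append, List.mem_cons] at ha
      rcases ha with ha | rfl | ha
      · exact hA a (by simp [ha])
      · omega
      · exact hA a (by simp [ha])
    rw [hmoved, hmerged, smul_zero, add_zero]

theorem wordProd_append_smul_eq_zero {ω : ℤ → R} {s : ℤ} {w : M}
    (hcomm : ∀ i k : ℤ, i + k ≠ 2 → ω i * ω k - ω k * ω i = (i - k) • ω (i + k - 1))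
    (hs : 2 ≤ s) (hw : ∀ i, s < i → ω i • w = 0) {A B : List ℤ} (hA : ∀ a ∈ A, 0 ≤ a)
    (hB : ∀ b ∈ B, b < 0) (hsum : s * (A.length + B.length) ≤ A.sum + B.sum)
    (hcond : B ≠ [] ∨ ∃ a ∈ A, a ≠ s) : wordProd ω (A ++ B) • w = 0 := by
  have hsumB : B.sum ≤ -B.length := by
    simpa using B.sum_le_card_nsmul (-1) fun b hb => by linarith [hB b hb]
  have hsumA : s * A.length + (s + 1) * B.length ≤ A.sum := by linarith
  have hx : ∃ x ∈ A, s < x := by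
    rcases hcond with hB | hA
    · refine List.exists_lt_of_mul_length_lt_sum ?_
      have : 0 < B.length := List.length_pos_iff.mpr hB
      nlinarith
    · exact List.exists_lt_of_mul_length_le_sum (by nlinarith) hA
  rw [wordProd_append, mul_smul,
    wordProd_smul_eq_zero_of_exists_lt hcomm hs hw A hA (by nlinarith) hx, smul_zero]

end Witt

open Witt in
theorem stmt7_general {M : Type*} [AddCommGroup M] [Module ℂ M]
    (ω : ℤ → Module.End ℂ M) (c : ℂ)
    (hrel : ∀ i k : ℤ, ω i * ω k - ω k * ω i =
      ((i - k : ℤ) : ℂ) • ω (i + k - 1) +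
        (if i + k = 2 then (((i - 1) ^ 3 - (i - 1) : ℤ) : ℂ) / 12 * c else 0) •
          (1 : Module.End ℂ M))
    (s : ℤ) (hs : 2 ≤ s) (w : M) (hw : ∀ i : ℤ, s < i → ω i w = 0)
    (q p : ℕ) (idx : Fin q → ℤ)
    (hpos : ∀ l : Fin q, (l : ℕ) < p → 0 ≤ idx l)
    (hneg : ∀ l : Fin q, p ≤ (l : ℕ) → idx l < 0)
    (hsum : s * (q : ℤ) ≤ ∑ l, idx l)
    (hcond : p < q ∨ ∃ l : Fin q, (l : ℕ) < p ∧ idx l ≠ s) :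
    List.foldl (fun v a => ω a v) w (List.ofFn idx) = 0 := by
  have hwitt : ∀ i k : ℤ, i + k ≠ 2 → ω i * ω k - ω k * ω i = (i - k) • ω (i + k - 1) := by
    intro i k hik
    rw [hrel, if_neg hik, zero_smul, add_zero, Int.cast_smul_eq_zsmul]
  change (List.ofFn idx).foldl (fun v a => ω a • v) w = 0
  rw [← List.take_append_drop p (List.ofFn idx), foldl_smul_eq_wordProd_smul]
  refine wordProd_append_smul_eq_zero hwitt hs hw (fun a ha => ?_) (fun b hb => ?_) ?_ ?_
  · obtain ⟨l, hl, rfl⟩ := List.mem_take_ofFn.mp ha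
    exact hpos l hl
  · obtain ⟨l, hl, rfl⟩ := List.mem_drop_ofFn.mp hb
    exact hneg l hl
  · rwa [← Nat.cast_add, ← List.length_append, List.take_append_drop, List.length_ofFn,
      List.sum_take_add_sum_drop, List.sum_ofFn]
  · rcases hcond with hpq | ⟨l, hlp, hl⟩
    · left
      simpa using hpq
    · exact Or.inr ⟨idx l, List.mem_take_ofFn.mpr ⟨l, hlp, rfl⟩, hl⟩

theorem stmt7 {M : Type*} [AddCommGroup M] [Module ℂ M]
    (ω : ℤ → Module.End ℂ M) (c : ℂ)
    (hrel : ∀ i k : ℤ, ω i * ω k - ω k * ω i =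
      ((i - k : ℤ) : ℂ) • ω (i + k - 1) +
        (if i + k = 2 then (((i - 1) ^ 3 - (i - 1) : ℤ) : ℂ) / 12 * c else 0) •
          (1 : Module.End ℂ M))
    (s : ℤ) (hs : 2 ≤ s) (w : M) (hw : ∀ i : ℤ, s < i → ω i w = 0)
    (q p : ℕ) (hpq : p ≤ q) (idx : Fin q → ℤ)
    (hpos : ∀ l : Fin q, (l : ℕ) < p → 0 ≤ idx l)
    (hneg : ∀ l : Fin q, p ≤ (l : ℕ) → idx l < 0)
    (hsum : s * (q : ℤ) ≤ ∑ l, idx l)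
    (hcond : p < q ∨ ∃ l : Fin q, (l : ℕ) < p ∧ idx l ≠ s) :
    List.foldl (fun v a => ω a v) w (List.ofFn idx) = 0 :=
  stmt7_general ω c hrel s hs w hw q p idx hpos hneg hsum hcond
end

section
/- Let V be a vertex algebra with elements ω and J whose modes satisfy [ω_i, J_j] = (3i − j)J_{i+j−1} for all i, j ∈ ℤ, acting on a module M. Fix w ∈ M, p ∈ ℕ, positive integers s₁,…,s_p, j ∈ ℤ, and i₁,…,i_p ∈ ℕ with i_k ≤ s_k for all k. Let e = ∑_{k=1}^p (s_k − i_k). Then J_{j+e} ω_{i_p} ⋯ ω_{i_1} w lies in the span of vectors of the form ω_{a_1} ⋯ ω_{a_m} J_i w with m ∈ ℕ, a_1,…,a_m ∈ ℤ, and i ≥ j. -/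
/-!
Let `W j` be the span of all `ω_{a_1} ⋯ ω_{a_m} J_i w` with `i ≥ j`; it is stable under every
`ω_b` and decreases in `j`. Commuting `J_N` past `ω_a` gives
`J_N ω_a v = ω_a J_N v - c • J_{N+a-1} v`, and for `N = j + d + (s - a)` with `0 < s`, `a ≤ s`
both `J`-indices are at least `j + d`, so the property `∀ j, J_{j+d} v ∈ W j` propagates from
`(v, d)` to `(ω_a v, d + (s - a))`. Starting from `(w, 0)` and applying one `ω` at a time gives
the theorem.
-/

section LowerSpan

variable {R M : Type*} [CommRing R] [AddCommGroup M] [Module R M]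
  (ω J : ℤ → Module.End R M) (w : M)

/-- `∑_{i ≥ j} ⟨ω⟩ J_i w` in the paper's notation. -/
def lowerSpan (j : ℤ) : Submodule R M :=
  Submodule.span R {v : M | ∃ (l : List ℤ) (i : ℤ), j ≤ i ∧
    v = List.foldr (fun a u => ω a u) (J i w) l}

theorem lowerSpan_antitone : Antitone (lowerSpan ω J w) := fun _ _ h =>
  Submodule.span_mono <| by
    rintro _ ⟨l, i, hi, rfl⟩
    exact ⟨l, i, h.trans hi, rfl⟩

theorem J_self_mem_lowerSpan (j : ℤ) : J j w ∈ lowerSpan ω J w j :=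
  Submodule.subset_span ⟨[], j, le_rfl, rfl⟩

theorem apply_mem_lowerSpan {j : ℤ} (b : ℤ) {x : M} (hx : x ∈ lowerSpan ω J w j) :
    ω b x ∈ lowerSpan ω J w j := by
  have hle : lowerSpan ω J w j ≤ (lowerSpan ω J w j).comap (ω b) :=
    Submodule.span_le.2 <| by
      rintro _ ⟨l, i, hi, rfl⟩
      exact Submodule.subset_span ⟨b :: l, i, hi, rfl⟩
  exact hle hx

variable {ω J w} (c : ℤ → ℤ → R)

theorem J_apply_eq_of_lie (hrel : ∀ i j, ⁅ω i, J j⁆ = c i j • J (i + j - 1))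
    (a N : ℤ) (v : M) :
    J N (ω a v) = ω a (J N v) - c a N • J (a + N - 1) v := by
  have h := LinearMap.congr_fun (hrel a N) v
  rw [Ring.lie_def, LinearMap.sub_apply] at h
  rw [← LinearMap.smul_apply, ← h, Module.End.mul_apply, Module.End.mul_apply,
    sub_sub_cancel]

theorem J_add_apply_mem_lowerSpan (hrel : ∀ i j, ⁅ω i, J j⁆ = c i j • J (i + j - 1))
    {v : M} {d : ℤ} (hv : ∀ j, J (j + d) v ∈ lowerSpan ω J w j) {s a : ℤ} (hs : 0 < s)
    (has : a ≤ s) (j : ℤ) :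
    J (j + (d + (s - a))) (ω a v) ∈ lowerSpan ω J w j := by
  rw [J_apply_eq_of_lie c hrel]
  refine sub_mem (apply_mem_lowerSpan ω J w a ?_) (Submodule.smul_mem _ _ ?_)
  · refine lowerSpan_antitone ω J w (by omega : j ≤ j + (s - a)) ?_
    rw [show j + (d + (s - a)) = j + (s - a) + d by ring]
    exact hv _
  · refine lowerSpan_antitone ω J w (by omega : j ≤ j + (s - 1)) ?_
    rw [show a + (j + (d + (s - a))) - 1 = j + (s - 1) + d by ring]
    exact hv _

theorem J_add_foldl_mem_lowerSpan (hrel : ∀ i j, ⁅ω i, J j⁆ = c i j • J (i + j - 1))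
    {p : ℕ} (sv iv : Fin p → ℤ) (hs : ∀ k, 0 < sv k) (his : ∀ k, iv k ≤ sv k)
    {v : M} {d : ℤ} (hv : ∀ j, J (j + d) v ∈ lowerSpan ω J w j) (j : ℤ) :
    J (j + (d + ∑ k, (sv k - iv k))) (List.foldl (fun v a => ω a v) v (List.ofFn iv)) ∈
      lowerSpan ω J w j := by
  induction p generalizing v d with
  | zero => simpa using hv j
  | succ p ih =>
    rw [List.ofFn_succ, List.foldl_cons, Fin.sum_univ_succ, ← add_assoc d]
    exact ih _ _ (fun k => hs k.succ) (fun k => his k.succ)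
      (J_add_apply_mem_lowerSpan c hrel hv (hs 0) (his 0))

end LowerSpan

theorem stmt9_general {M : Type*} [AddCommGroup M] [Module ℂ M]
    (ω J : ℤ → Module.End ℂ M)
    (hrel : ∀ i j : ℤ, ω i * J j - J j * ω i = ((3 * i - j : ℤ) : ℂ) • J (i + j - 1))
    (w : M) (p : ℕ) (sv iv : Fin p → ℤ)
    (hs : ∀ k, 0 < sv k) (his : ∀ k, iv k ≤ sv k)
    (j : ℤ) :
    J (j + ∑ k, (sv k - iv k)) (List.foldl (fun v a => ω a v) w (List.ofFn iv)) ∈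
      Submodule.span ℂ {v : M | ∃ (l : List ℤ) (i : ℤ), j ≤ i ∧
        v = List.foldr (fun a u => ω a u) (J i w) l} := by
  have hlie : ∀ i j : ℤ, ⁅ω i, J j⁆ = ((3 * i - j : ℤ) : ℂ) • J (i + j - 1) :=
    fun i j => (Ring.lie_def _ _).trans (hrel i j)
  have h := J_add_foldl_mem_lowerSpan _ hlie sv iv hs his (d := 0)
    (fun j => by simpa using J_self_mem_lowerSpan ω J w j) j
  rwa [zero_add] at h

theorem stmt9 {M : Type*} [AddCommGroup M] [Module ℂ M]
    (ω J : ℤ → Module.End ℂ M)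
    (hrel : ∀ i j : ℤ, ω i * J j - J j * ω i = ((3 * i - j : ℤ) : ℂ) • J (i + j - 1))
    (w : M) (p : ℕ) (sv iv : Fin p → ℤ)
    (hs : ∀ k, 0 < sv k) (hi0 : ∀ k, 0 ≤ iv k) (his : ∀ k, iv k ≤ sv k)
    (j : ℤ) :
    J (j + ∑ k, (sv k - iv k)) (List.foldl (fun v a => ω a v) w (List.ofFn iv)) ∈
      Submodule.span ℂ {v : M | ∃ (l : List ℤ) (i : ℤ), j ≤ i ∧
        v = List.foldr (fun a u => ω a u) (J i w) l} :=
  stmt9_general ω J hrel w p sv iv hs his j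
end

section
/- Let M be a module over the Virasoro algebra (modes ω_i = L(i−1)), let s ≥ 2 and t with 2 ≤ t ≤ s, and let w ∈ M satisfy ω_i w = 0 for i > s. Suppose additionally operators J_j (j ∈ ℤ) on M satisfy [ω_i, J_j] = (3i−j)J_{i+j−1}. Let 0 ≤ p ≤ q, i₁,…,i_p ≥ 0, i_{p+1},…,i_q < 0, n ∈ ℤ, and set j = n − i₁ − ⋯ − i_q + s(q−1) + t. If p < q, or some i_l (1 ≤ l ≤ p) lies outside {t, t+1, …, s}, then ω_{i_q} ⋯ ω_{i_{p+1}} J_j ω_{i_p} ⋯ ω_{i_1} w lies in ∑_{i ≥ n+1} ⟨ω⟩ J_i w. -/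
namespace Stmt11Aux

variable {M : Type*} [AddCommGroup M] [Module ℂ M]

/-- Apply the word of `ω`'s given by `l` (head innermost) to `w`. -/
def Wd (ω : ℤ → Module.End ℂ M) (w : M) (l : List ℤ) : M :=
  l.foldl (fun v a => ω a v) w

/-- The target span. -/
def Sp (ω J : ℤ → Module.End ℂ M) (w : M) (n : ℤ) : Submodule ℂ M :=
  Submodule.span ℂ {v : M | ∃ (l : List ℤ) (i : ℤ), n + 1 ≤ i ∧
    v = List.foldr (fun a u => ω a u) (J i w) l}

def th (s : ℤ) (l : List ℤ) : ℤ := s * l.length - l.sum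

theorem th_concat (s : ℤ) (l : List ℤ) (a : ℤ) :
    th s (l ++ [a]) = th s l + (s - a) := by
  simp [th]
  push_cast
  ring

theorem Wd_concat (ω : ℤ → Module.End ℂ M) (w : M) (l : List ℤ) (a : ℤ) :
    Wd ω w (l ++ [a]) = ω a (Wd ω w l) := by
  simp [Wd, List.foldl_append]

theorem Sp_omega {ω J : ℤ → Module.End ℂ M} {w : M} {n : ℤ} (a : ℤ) {v : M}
    (hv : v ∈ Sp ω J w n) : ω a v ∈ Sp ω J w n := by
  have h1 : Submodule.map (ω a) (Sp ω J w n) ≤ Sp ω J w n := by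
    rw [Sp, Submodule.map_span, Submodule.span_le]
    rintro _ ⟨x, ⟨l, i, hi, rfl⟩, rfl⟩
    exact Submodule.subset_span ⟨a :: l, i, hi, rfl⟩
  exact h1 (Submodule.mem_map_of_mem hv)

theorem Sp_J {ω J : ℤ → Module.End ℂ M} {w : M} {n : ℤ} (i : ℤ) (hi : n + 1 ≤ i) :
    J i w ∈ Sp ω J w n :=
  Submodule.subset_span ⟨[], i, hi, rfl⟩

theorem foldl_mem {ω J : ℤ → Module.End ℂ M} {w : M} {n : ℤ} (L : List ℤ) :
    ∀ v : M, v ∈ Sp ω J w n → L.foldl (fun v a => ω a v) v ∈ Sp ω J w n := by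
  induction L with
  | nil => intro v hv; exact hv
  | cons a L ih => intro v hv; exact ih _ (Sp_omega a hv)

theorem commJ {ω J : ℤ → Module.End ℂ M}
    (hωJ : ∀ i j : ℤ, ω i * J j - J j * ω i = ((3 * i - j : ℤ) : ℂ) • J (i + j - 1))
    (b j : ℤ) (v : M) :
    J j (ω b v) = ω b (J j v) - ((3 * b - j : ℤ) : ℂ) • J (b + j - 1) v := by
  have h := LinearMap.congr_fun (hωJ b j) v
  simp only [LinearMap.sub_apply, Module.End.mul_apply, LinearMap.smul_apply] at h
  rw [sub_eq_iff_eq_add] at h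
  rw [h]
  abel

theorem commω {ω : ℤ → Module.End ℂ M} {c : ℂ}
    (hω : ∀ i k : ℤ, ω i * ω k - ω k * ω i =
      ((i - k : ℤ) : ℂ) • ω (i + k - 1) +
        (if i + k = 2 then (((i - 1) ^ 3 - (i - 1) : ℤ) : ℂ) / 12 * c else 0) •
          (1 : Module.End ℂ M))
    (a b : ℤ) (hab : a + b ≠ 2) (v : M) :
    ω a (ω b v) = ω b (ω a v) + ((a - b : ℤ) : ℂ) • ω (a + b - 1) v := by
  have h := LinearMap.congr_fun (hω a b) v
  rw [if_neg hab] at h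
  simp only [LinearMap.sub_apply, LinearMap.add_apply, Module.End.mul_apply,
    LinearMap.smul_apply, zero_smul, LinearMap.zero_apply, add_zero] at h
  rw [sub_eq_iff_eq_add] at h
  rw [h]
  abel

theorem sum_neg_le : ∀ L : List ℤ, (∀ x ∈ L, x < 0) → L.sum ≤ -(L.length : ℤ) := by
  intro L
  induction L with
  | nil => intro _; simp
  | cons a L ih =>
    intro h
    have h1 := h a (by simp)
    have h2 := ih fun x hx => h x (by simp [hx])
    simp only [List.sum_cons, List.length_cons]
    push_cast
    omega

theorem sum_f_eq (s : ℤ) : ∀ L : List ℤ, (∀ x ∈ L, x ≤ s) →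
    (L.map fun x => max (s - x) 0).sum = th s L := by
  intro L
  induction L with
  | nil => intro _; simp [th]
  | cons a L ih =>
    intro h
    have h1 : max (s - a) 0 = s - a := max_eq_left (by have := h a (by simp); omega)
    have h2 := ih fun x hx => h x (by simp [hx])
    simp only [List.map_cons, List.sum_cons, h1, h2, th, List.length_cons, List.sum_cons]
    push_cast
    ring


theorem lemB {ω J : ℤ → Module.End ℂ M} {w : M} {n s : ℤ}
    (hωJ : ∀ i j : ℤ, ω i * J j - J j * ω i = ((3 * i - j : ℤ) : ℂ) • J (i + j - 1))
    (hs : 2 ≤ s) :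
    ∀ l : List ℤ, (∀ x ∈ l, 0 ≤ x) → ∀ j : ℤ,
      n + 1 + (l.map fun x => max (s - x) 0).sum ≤ j →
      J j (Wd ω w l) ∈ Sp ω J w n := by
  intro l
  induction l using List.reverseRecOn with
  | nil =>
    intro _ j hj
    exact Sp_J j (by simpa using hj)
  | append_singleton l' b ih =>
    intro h0 j hj
    have hb : 0 ≤ b := h0 b (by simp)
    have h0' : ∀ x ∈ l', 0 ≤ x := fun x hx => h0 x (by simp [hx])
    have hsum : ((l' ++ [b]).map fun x => max (s - x) 0).sum
        = (l'.map fun x => max (s - x) 0).sum + max (s - b) 0 := by simp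
    rw [hsum] at hj
    have hf1 : (0:ℤ) ≤ max (s - b) 0 := le_max_right _ _
    have hf2 : (1:ℤ) ≤ b + max (s - b) 0 := by
      rcases le_total (s - b) 0 with h | h
      · rw [max_eq_right h]; omega
      · rw [max_eq_left h]; omega
    rw [Wd_concat, commJ hωJ]
    refine Submodule.sub_mem _ ?_ (Submodule.smul_mem _ _ ?_)
    · exact Sp_omega b (ih h0' j (by linarith))
    · exact ih h0' (b + j - 1) (by linarith)

theorem lemZ {ω : ℤ → Module.End ℂ M} {c : ℂ} {w : M} {s t : ℤ}
    (hω : ∀ i k : ℤ, ω i * ω k - ω k * ω i =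
      ((i - k : ℤ) : ℂ) • ω (i + k - 1) +
        (if i + k = 2 then (((i - 1) ^ 3 - (i - 1) : ℤ) : ℂ) / 12 * c else 0) •
          (1 : Module.End ℂ M))
    (hw : ∀ i : ℤ, s < i → ω i w = 0) (h2t : 2 ≤ t) (hts : t ≤ s) :
    ∀ l : List ℤ, (∀ x ∈ l, 0 ≤ x) → ∀ a : ℤ, s < a →
      ω a (Wd ω w l) ∈ Submodule.span ℂ {v : M | ∃ r : List ℤ, (∀ x ∈ r, 0 ≤ x) ∧
        r.length ≤ l.length ∧
        (th s r + (s + 1 - t) ≤ th s (l ++ [a]) ∨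
          (th s r ≤ th s (l ++ [a]) ∧ ∃ x ∈ r, s < x ∨ x < t)) ∧
        v = Wd ω w r} := by
  intro l
  induction l using List.reverseRecOn with
  | nil =>
    intro _ a ha
    have h0 : ω a (Wd ω w []) = 0 := by
      show ω a w = 0
      exact hw a ha
    rw [h0]
    exact Submodule.zero_mem _
  | append_singleton l' b ih =>
    intro h0 a ha
    have hb : 0 ≤ b := h0 b (by simp)
    have h0' : ∀ x ∈ l', 0 ≤ x := fun x hx => h0 x (by simp [hx])
    rw [Wd_concat]
    have hab : a + b ≠ 2 := by omega
    rw [commω hω a b hab]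
    refine Submodule.add_mem _ ?_ (Submodule.smul_mem _ _ ?_)
    · have hz := ih h0' a ha
      have hmem := Submodule.mem_map_of_mem (f := ω b) hz
      rw [Submodule.map_span] at hmem
      refine Submodule.span_le.mpr ?_ hmem
      rintro _ ⟨v, ⟨r, hr0, hrlen, hrth, rfl⟩, rfl⟩
      rw [← Wd_concat]
      refine Submodule.subset_span ⟨r ++ [b], ?_, ?_, ?_, rfl⟩
      · intro x hx
        rcases List.mem_append.mp hx with h | h
        · exact hr0 x h
        · simp at h; omega
      · simp only [List.length_append, List.length_singleton]
        omega
      · have e1 := th_concat s r b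
        have e2 := th_concat s (l' ++ [b]) a
        have e3 := th_concat s (l' ++ [a]) b
        have e4 := th_concat s l' a
        have e5 := th_concat s l' b
        -- note (l' ++ [b]) ++ [a] and we compare against th s (r ++ [b]) vs th s ((l'++[b])++[a])
        rcases hrth with h | ⟨h, x, hx, hxb⟩
        · left; rw [e1, e2]; rw [e4] at h; rw [e5]; linarith
        · right
          refine ⟨?_, x, List.mem_append.mpr (Or.inl hx), hxb⟩
          rw [e1, e2]; rw [e4] at h; rw [e5]; linarith
    · rw [← Wd_concat]
      refine Submodule.subset_span ⟨l' ++ [a + b - 1], ?_, by simp, ?_, rfl⟩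
      · intro x hx
        rcases List.mem_append.mp hx with h | h
        · exact h0' x h
        · simp at h; omega
      · left
        have e1 := th_concat s l' (a + b - 1)
        have e2 := th_concat s (l' ++ [b]) a
        have e5 := th_concat s l' b
        rw [e1, e2, e5]
        linarith

theorem lemC {ω J : ℤ → Module.End ℂ M} {c : ℂ} {w : M} {n s t : ℤ}
    (hω : ∀ i k : ℤ, ω i * ω k - ω k * ω i =
      ((i - k : ℤ) : ℂ) • ω (i + k - 1) +
        (if i + k = 2 then (((i - 1) ^ 3 - (i - 1) : ℤ) : ℂ) / 12 * c else 0) •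
          (1 : Module.End ℂ M))
    (hωJ : ∀ i j : ℤ, ω i * J j - J j * ω i = ((3 * i - j : ℤ) : ℂ) • J (i + j - 1))
    (hw : ∀ i : ℤ, s < i → ω i w = 0) (h2t : 2 ≤ t) (hts : t ≤ s) :
    ∀ N : ℕ, ∀ l : List ℤ, l.length ≤ N → (∀ x ∈ l, 0 ≤ x) →
      (∃ x ∈ l, s < x ∨ x < t) → ∀ j : ℤ, n + t - s + th s l ≤ j →
      J j (Wd ω w l) ∈ Sp ω J w n := by
  intro N
  induction N with
  | zero =>
    intro l hlen _ hbad j _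
    have hnil : l = [] := List.length_eq_zero_iff.mp (Nat.le_zero.mp hlen)
    subst hnil
    rcases hbad with ⟨x, hx, _⟩
    simp at hx
  | succ N ih =>
    intro l hlen h0 hbad j hj
    rcases List.eq_nil_or_concat l with rfl | ⟨l', b, rfl⟩
    · rcases hbad with ⟨x, hx, _⟩
      simp at hx
    · simp only [List.concat_eq_append] at hlen h0 hbad hj ⊢
      have hb0 : 0 ≤ b := h0 b (by simp)
      have h0' : ∀ x ∈ l', 0 ≤ x := fun x hx => h0 x (by simp [hx])
      have hlen' : l'.length ≤ N := by
        simp only [List.length_append, List.length_singleton] at hlen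
        omega
      have eth := th_concat s l' b
      by_cases hbs : s < b
      · rw [Wd_concat]
        have hz := lemZ hω hw h2t hts l' h0' b hbs
        have hmem := Submodule.mem_map_of_mem (f := J j) hz
        rw [Submodule.map_span] at hmem
        refine Submodule.span_le.mpr ?_ hmem
        rintro _ ⟨v, ⟨r, hr0, hrlen, hrth, rfl⟩, rfl⟩
        show J j (Wd ω w r) ∈ Sp ω J w n
        by_cases hbadr : ∃ x ∈ r, s < x ∨ x < t
        · refine ih r (le_trans hrlen hlen') hr0 hbadr j ?_
          rcases hrth with h | ⟨h, _⟩ <;> linarith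
        · have hrs : ∀ x ∈ r, x ≤ s := fun x hx =>
            le_of_not_gt fun hc => hbadr ⟨x, hx, Or.inl hc⟩
        
          rcases hrth with h | ⟨h, hb2⟩
          · refine lemB (w := w) (n := n) (s := s) hωJ (by omega) r hr0 j ?_
            rw [sum_f_eq s r hrs]
            linarith
          · exact absurd hb2 hbadr
      · push_neg at hbs
        rw [Wd_concat, commJ hωJ]
        refine Submodule.sub_mem _ ?_ (Submodule.smul_mem _ _ ?_)
        · refine Sp_omega b ?_
          by_cases hbad' : ∃ x ∈ l', s < x ∨ x < t
          · exact ih l' hlen' h0' hbad' j (by linarith)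
          · have hbt : b < t := by
              rcases hbad with ⟨x, hx, hxb⟩
              rcases List.mem_append.mp hx with h | h
              · exact absurd ⟨x, h, hxb⟩ hbad'
              · simp at h
                subst h
                rcases hxb with h | h
                · omega
                · exact h
            have hls : ∀ x ∈ l', x ≤ s := fun x hx =>
              le_of_not_gt fun hc => hbad' ⟨x, hx, Or.inl hc⟩
            refine lemB (w := w) (n := n) (s := s) hωJ (by omega) l' h0' j ?_
            rw [sum_f_eq s l' hls]
            linarith
        · by_cases hbad' : ∃ x ∈ l', s < x ∨ x < t
          · exact ih l' hlen' h0' hbad' (b + j - 1) (by linarith)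
          · have hls : ∀ x ∈ l', x ≤ s := fun x hx =>
              le_of_not_gt fun hc => hbad' ⟨x, hx, Or.inl hc⟩
            refine lemB (w := w) (n := n) (s := s) hωJ (by omega) l' h0' (b + j - 1) ?_
            rw [sum_f_eq s l' hls]
            linarith
end Stmt11Aux

open Stmt11Aux in
theorem stmt11 {M : Type*} [AddCommGroup M] [Module ℂ M]
    (ω J : ℤ → Module.End ℂ M) (c : ℂ)
    (hω : ∀ i k : ℤ, ω i * ω k - ω k * ω i =
      ((i - k : ℤ) : ℂ) • ω (i + k - 1) +
        (if i + k = 2 then (((i - 1) ^ 3 - (i - 1) : ℤ) : ℂ) / 12 * c else 0) •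
          (1 : Module.End ℂ M))
    (hωJ : ∀ i j : ℤ, ω i * J j - J j * ω i = ((3 * i - j : ℤ) : ℂ) • J (i + j - 1))
    (s t : ℤ) (h2t : 2 ≤ t) (hts : t ≤ s)
    (w : M) (hw : ∀ i : ℤ, s < i → ω i w = 0)
    (q p : ℕ) (hpq : p ≤ q) (idx : Fin q → ℤ)
    (hpos : ∀ l : Fin q, (l : ℕ) < p → 0 ≤ idx l)
    (hneg : ∀ l : Fin q, p ≤ (l : ℕ) → idx l < 0)
    (n : ℤ)
    (hcond : p < q ∨ ∃ l : Fin q, (l : ℕ) < p ∧ ¬ (t ≤ idx l ∧ idx l ≤ s)) :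
    List.foldl (fun v a => ω a v)
      (J (n - (∑ l, idx l) + s * ((q : ℤ) - 1) + t)
        (List.foldl (fun v a => ω a v) w ((List.ofFn idx).take p)))
      ((List.ofFn idx).drop p) ∈
      Submodule.span ℂ {v : M | ∃ (l : List ℤ) (i : ℤ), n + 1 ≤ i ∧
        v = List.foldr (fun a u => ω a u) (J i w) l} := by
  classical
  set l0 := (List.ofFn idx).take p with hl0
  set ld := (List.ofFn idx).drop p with hld
  have hql : (List.ofFn idx).length = q := by simp
  have hl0len : l0.length = p := by
    rw [hl0, List.length_take, hql]
    omega
  have hl0pos : ∀ x ∈ l0, 0 ≤ x := by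
    intro x hx
    rcases List.mem_iff_getElem.mp hx with ⟨i, hi, rfl⟩
    have hip : i < p := by omega
    have hiq : i < q := lt_of_lt_of_le hip hpq
    have hgt : l0[i] = idx ⟨i, hiq⟩ := by
      simp only [hl0, List.getElem_take, List.getElem_ofFn]
    rw [hgt]
    exact hpos ⟨i, hiq⟩ hip
  have hldlen : l0.length + ld.length = q := by
    rw [hl0, hld, ← List.length_append, List.take_append_drop, hql]
  have hldneg : ∀ x ∈ ld, x < 0 := by
    intro x hx
    rcases List.mem_iff_getElem.mp hx with ⟨i, hi, rfl⟩
    have hiq : p + i < q := by omega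
    have hgt : ld[i] = idx ⟨p + i, hiq⟩ := by
      simp only [hld, List.getElem_drop, List.getElem_ofFn]
    rw [hgt]
    exact hneg ⟨p + i, hiq⟩ (Nat.le_add_right p i)
  have hsplit : l0.sum + ld.sum = ∑ l, idx l := by
    rw [← List.sum_ofFn, hl0, hld, ← List.sum_append, List.take_append_drop]
  have hldsum : ld.sum ≤ -(ld.length : ℤ) := sum_neg_le ld hldneg
  have hmem0 : ∀ lf : Fin q, (lf : ℕ) < p → idx lf ∈ l0 := by
    intro lf hlf
    have h1 : (lf : ℕ) < l0.length := by omega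
    refine List.mem_iff_getElem.mpr ⟨lf, h1, ?_⟩
    simp only [hl0, List.getElem_take, List.getElem_ofFn]
  -- numeric abbreviations
  have hcast : ((l0.length : ℤ)) = (p : ℤ) := by exact_mod_cast hl0len
  have hcastq : ((ld.length : ℤ)) = (q : ℤ) - (p : ℤ) := by omega
  have hPQ : (p : ℤ) ≤ (q : ℤ) := by exact_mod_cast hpq
  have key : J (n - (∑ l, idx l) + s * ((q : ℤ) - 1) + t) (Wd ω w l0) ∈ Sp ω J w n := by
    by_cases hbad : ∃ x ∈ l0, s < x ∨ x < t
    · refine lemC (c := c) hω hωJ hw h2t hts l0.length l0 le_rfl hl0pos hbad _ ?_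
      have hth : th s l0 = s * (p : ℤ) - l0.sum := by rw [th, hcast]
      rw [hth, ← hsplit]
      have he : s * ((q:ℤ) - (p:ℤ)) = s * (q:ℤ) - s * (p:ℤ) := by ring
      have h0 : (0:ℤ) ≤ s * ((q:ℤ) - (p:ℤ)) :=
        mul_nonneg (by omega) (by omega)
      have h1 : (0:ℤ) ≤ (ld.length : ℤ) := by positivity
      linarith
    · have hlt : p < q := by
        rcases hcond with h | ⟨lf, hlf, hlb⟩
        · exact h
        · exact absurd ⟨idx lf, hmem0 lf hlf, by omega⟩ hbad
      have hls : ∀ x ∈ l0, x ≤ s := fun x hx =>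
        le_of_not_gt fun hc => hbad ⟨x, hx, Or.inl hc⟩
      refine lemB (w := w) (n := n) (s := s) hωJ (by omega) l0 hl0pos _ ?_
      rw [sum_f_eq s l0 hls]
      have hth : th s l0 = s * (p : ℤ) - l0.sum := by rw [th, hcast]
      rw [hth, ← hsplit]
      have hPQ1 : (p : ℤ) + 1 ≤ (q : ℤ) := by exact_mod_cast hlt
      have he : s * ((q:ℤ) - (p:ℤ) - 1) = s * (q:ℤ) - s * (p:ℤ) - s := by ring
      have h0 : (0:ℤ) ≤ s * ((q:ℤ) - (p:ℤ) - 1) :=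
        mul_nonneg (by omega) (by omega)
      linarith
  exact foldl_mem ld _ key
end

section
/- Let s ≥ 2 and let w be a vector in a module for operators ω_i, J_j with [ω_i, J_j] = (3i−j)J_{i+j−1}, satisfying ω_s w = λ_s w with λ_s ≠ 0, ω_i w = 0 for i > s, and J_i w = 0 for all i > m for some integer m, with J_m w ≠ 0. Suppose further that for every n ∈ ℤ, (−n + 2s + 1)λ_s² J_n w ∈ ∑_{j ≥ n+1} ⟨ω⟩ J_j w. Then m = 2s+1, and for every n ∈ ℤ, J_n w ∈ ⟨ω⟩ J_{2s+1} w. -/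
private lemma foldr_zero {M : Type*} [AddCommGroup M] [Module ℂ M]
    (ω : ℤ → Module.End ℂ M) :
    ∀ l : List ℤ, List.foldr (fun a u => ω a u) (0 : M) l = 0
  | [] => rfl
  | a :: l => by
      show ω a (List.foldr (fun a u => ω a u) (0 : M) l) = 0
      rw [foldr_zero ω l, map_zero]

theorem stmt14 {M : Type*} [AddCommGroup M] [Module ℂ M]
    (ω J : ℤ → Module.End ℂ M)
    (hrel : ∀ i j : ℤ, ω i * J j - J j * ω i = ((3 * i - j : ℤ) : ℂ) • J (i + j - 1))
    (s : ℤ) (hs : 2 ≤ s) (lam : ℂ) (hlam : lam ≠ 0) (w : M)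
    (hωs : ω s w = lam • w) (hω : ∀ i : ℤ, s < i → ω i w = 0)
    (m : ℤ) (hJm : J m w ≠ 0) (hJ : ∀ i : ℤ, m < i → J i w = 0)
    (hyp : ∀ n : ℤ, (((-n + 2 * s + 1 : ℤ) : ℂ) * lam ^ 2) • J n w ∈
      Submodule.span ℂ {v : M | ∃ (l : List ℤ) (i : ℤ), n + 1 ≤ i ∧
        v = List.foldr (fun a u => ω a u) (J i w) l}) :
    m = 2 * s + 1 ∧ ∀ n : ℤ, J n w ∈
      Submodule.span ℂ {v : M | ∃ l : List ℤ,
        v = List.foldr (fun a u => ω a u) (J (2 * s + 1) w) l} := by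
  have hlam2 : lam ^ 2 ≠ 0 := pow_ne_zero _ hlam
  -- Step 1 : m = 2s+1
  have hm : m = 2 * s + 1 := by
    have h := hyp m
    have hsub : {v : M | ∃ (l : List ℤ) (i : ℤ), m + 1 ≤ i ∧
        v = List.foldr (fun a u => ω a u) (J i w) l} ⊆ (⊥ : Submodule ℂ M) := by
      rintro v ⟨l, i, hi, rfl⟩
      have hz : J i w = 0 := hJ i (by omega)
      simp [hz, foldr_zero]
    have h0 : (((-m + 2 * s + 1 : ℤ) : ℂ) * lam ^ 2) • J m w = 0 := by
      have := Submodule.span_le.mpr hsub h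
      simpa using this
    rcases smul_eq_zero.mp h0 with hc | hc
    · rcases mul_eq_zero.mp hc with hc | hc
      · have : (-m + 2 * s + 1 : ℤ) = 0 := by exact_mod_cast hc
        omega
      · exact absurd hc hlam2
    · exact absurd hc hJm
  refine ⟨hm, ?_⟩
  subst hm
  set S : Submodule ℂ M := Submodule.span ℂ {v : M | ∃ l : List ℤ,
      v = List.foldr (fun a u => ω a u) (J (2 * s + 1) w) l} with hS
  have hωS : ∀ a : ℤ, ∀ u ∈ S, ω a u ∈ S := by
    intro a u hu
    refine Submodule.span_induction ?_ ?_ ?_ ?_ hu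
    · rintro v ⟨l, rfl⟩
      exact Submodule.subset_span ⟨a :: l, rfl⟩
    · simpa using (zero_mem S)
    · intro x y _ _ hx hy
      simpa [map_add] using S.add_mem hx hy
    · intro c x _ hx
      simpa [map_smul] using S.smul_mem c hx
  have hfold : ∀ l : List ℤ, ∀ u ∈ S, List.foldr (fun a u => ω a u) u l ∈ S := by
    intro l
    induction l with
    | nil => intro u hu; exact hu
    | cons a l ih =>
        intro u hu
        exact hωS a _ (ih u hu)
  have key : ∀ k : ℕ, ∀ n : ℤ, 2 * s + 1 - (k : ℤ) ≤ n → J n w ∈ S := by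
    intro k
    induction k with
    | zero =>
        intro n hn
        rcases eq_or_lt_of_le (by omega : 2 * s + 1 ≤ n) with h | h
        · exact h ▸ Submodule.subset_span ⟨[], rfl⟩
        · rw [hJ n h]; exact zero_mem S
    | succ k ih =>
        intro n hn
        by_cases hcase : 2 * s + 1 - (k : ℤ) ≤ n
        · exact ih n hcase
        · push_neg at hcase
          have hc : ((-n + 2 * s + 1 : ℤ) : ℂ) ≠ 0 := by
            rw [Int.cast_ne_zero]; omega
          have hc2 : ((-n + 2 * s + 1 : ℤ) : ℂ) * lam ^ 2 ≠ 0 := mul_ne_zero hc hlam2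
          have hsub : {v : M | ∃ (l : List ℤ) (i : ℤ), n + 1 ≤ i ∧
              v = List.foldr (fun a u => ω a u) (J i w) l} ⊆ (S : Set M) := by
            rintro v ⟨l, i, hi, rfl⟩
            exact hfold l _ (ih i (by omega))
          have h2 : (((-n + 2 * s + 1 : ℤ) : ℂ) * lam ^ 2) • J n w ∈ S :=
            Submodule.span_le.mpr hsub (hyp n)
          have h3 := S.smul_mem (((-n + 2 * s + 1 : ℤ) : ℂ) * lam ^ 2)⁻¹ h2
          rwa [smul_smul, inv_mul_cancel₀ hc2, one_smul] at h3
  intro n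
  exact key (2 * s + 1 - n).toNat n (by omega)
end

section
/- Let w be a vector in a module for the Witt algebra (operators ω_i, i ∈ ℤ, [ω_i, ω_k] = (i−k)ω_{i+k−1} with no central obstruction at the relevant indices) and suppose ω_s w = λ_s w and ω_i w = 0 for i > s, where s ≥ 2 and λ_s ∈ ℂ. Suppose operators J_j satisfy [ω_i, J_j] = (3i−j)J_{i+j−1}, and let n ∈ ℤ. Then: (ω_{−1}²J_{−2}𝟙 − 2ω_{−2}ω_{−1}J_{−1}𝟙)_{n+2s+3} w ≡ (−n+2s+1)λ_s² J_n w modulo ∑_{j≥n+1}⟨ω⟩J_j w, where the only surviving term in the mode expansion is the one with both ω-indices equal to s: the coefficient is (−n−1) − 2(−s−1) = −n+2s+1. -/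
/-- Generalized binomial coefficient `C(a,k)` of an integer `a`, valued in `ℂ`. -/
noncomputable def zbinom (a : ℤ) (k : ℕ) : ℂ :=
  (∏ m ∈ Finset.range k, ((a : ℂ) - m)) / (Nat.factorial k)

/-- Normal-ordered expansion of the mode `(ω_{-p₁}ω_{-p₂}J_{-p₃}𝟙)_n` applied to `v`. -/
noncomputable def tripleMode {M : Type*} [AddCommGroup M] [Module ℂ M]
    (ω J : ℤ → Module.End ℂ M) (p₁ p₂ p₃ : ℕ) (n : ℤ) (v : M) : M :=
  ∑ᶠ q : ℤ × ℤ,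
    (zbinom (-q.1 - 1) (p₁ - 1) * zbinom (-q.2 - 1) (p₂ - 1) *
        zbinom (-(n + 1 - p₁ - p₂ - p₃ - q.1 - q.2) - 1) (p₃ - 1)) •
      (if q.1 < 0 ∧ q.2 < 0 then
        ω q.1 (ω q.2 (J (n + 1 - p₁ - p₂ - p₃ - q.1 - q.2) v))
      else if q.1 < 0 ∧ 0 ≤ q.2 then
        ω q.1 (J (n + 1 - p₁ - p₂ - p₃ - q.1 - q.2) (ω q.2 v))
      else if 0 ≤ q.1 ∧ q.2 < 0 then
        ω q.2 (J (n + 1 - p₁ - p₂ - p₃ - q.1 - q.2) (ω q.1 v))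
      else J (n + 1 - p₁ - p₂ - p₃ - q.1 - q.2) (ω q.2 (ω q.1 v)))

lemma zbinom_zero' (a : ℤ) : zbinom a 0 = 1 := by simp [zbinom]

lemma zbinom_one' (a : ℤ) : zbinom a 1 = (a : ℂ) := by simp [zbinom]

/-- Auxiliary: the vector part of the summand in the relevant triple modes. -/
noncomputable def fvec {M : Type*} [AddCommGroup M] [Module ℂ M]
    (ω J : ℤ → Module.End ℂ M) (n s : ℤ) (w : M) (q : ℤ × ℤ) : M :=
  if q.1 < 0 ∧ q.2 < 0 then ω q.1 (ω q.2 (J (n + 2 * s - q.1 - q.2) w))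
  else if q.1 < 0 ∧ 0 ≤ q.2 then ω q.1 (J (n + 2 * s - q.1 - q.2) (ω q.2 w))
  else if 0 ≤ q.1 ∧ q.2 < 0 then ω q.2 (J (n + 2 * s - q.1 - q.2) (ω q.1 w))
  else J (n + 2 * s - q.1 - q.2) (ω q.2 (ω q.1 w))

theorem stmt16 {M : Type*} [AddCommGroup M] [Module ℂ M]
    (ω J : ℤ → Module.End ℂ M) (c : ℂ)
    (hω : ∀ i k : ℤ, ω i * ω k - ω k * ω i =
      ((i - k : ℤ) : ℂ) • ω (i + k - 1) +
        (if i + k = 2 then (((i - 1) ^ 3 - (i - 1) : ℤ) : ℂ) / 12 * c else 0) •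
          (1 : Module.End ℂ M))
    (hωJ : ∀ i j : ℤ, ω i * J j - J j * ω i = ((3 * i - j : ℤ) : ℂ) • J (i + j - 1))
    (s : ℤ) (hs : 2 ≤ s) (lam : ℂ) (w : M)
    (hωs : ω s w = lam • w) (hwv : ∀ i : ℤ, s < i → ω i w = 0)
    (htr : ∀ v : M, ∃ N : ℤ, ∀ i : ℤ, N ≤ i → ω i v = 0 ∧ J i v = 0)
    (n : ℤ) :
    tripleMode ω J 1 1 2 (n + 2 * s + 3) w -
        (2 : ℂ) • tripleMode ω J 2 1 1 (n + 2 * s + 3) w -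
        (((-n + 2 * s + 1 : ℤ) : ℂ) * lam ^ 2) • J n w ∈
      Submodule.span ℂ {v : M | ∃ (l : List ℤ) (i : ℤ), n + 1 ≤ i ∧
        v = List.foldr (fun a u => ω a u) (J i w) l} := by
  obtain ⟨N₀, hN⟩ := htr w
  set S : Submodule ℂ M := Submodule.span ℂ {v : M | ∃ (l : List ℤ) (i : ℤ), n + 1 ≤ i ∧
      v = List.foldr (fun a u => ω a u) (J i w) l} with hSdef
  have hJmem : ∀ i : ℤ, n + 1 ≤ i → J i w ∈ S := fun i hi =>
    Submodule.subset_span ⟨[], i, hi, rfl⟩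
  have hωmem : ∀ (a : ℤ) (u : M), u ∈ S → ω a u ∈ S := by
    intro a u hu
    induction hu using Submodule.span_induction with
    | mem x hx =>
        obtain ⟨l, i, hi, rfl⟩ := hx
        exact Submodule.subset_span ⟨a :: l, i, hi, rfl⟩
    | zero => rw [map_zero]; exact S.zero_mem
    | add x y _ _ hx hy => rw [map_add]; exact S.add_mem hx hy
    | smul r x _ hx => rw [map_smul]; exact S.smul_mem r hx
  have hJωcomm : ∀ (cc jj : ℤ) (v : M),
      J jj (ω cc v) = ω cc (J jj v) - ((3 * cc - jj : ℤ) : ℂ) • J (cc + jj - 1) v := by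
    intro cc jj v
    have h := congrArg (fun T : Module.End ℂ M => T v) (hωJ cc jj)
    simp only [LinearMap.sub_apply, Module.End.mul_apply, LinearMap.smul_apply] at h
    rw [eq_sub_iff_add_eq, ← h]
    abel
  have hωωapp : ∀ i k : ℤ,
      ω i (ω k w) = ω k (ω i w) + ((i - k : ℤ) : ℂ) • ω (i + k - 1) w +
        (if i + k = 2 then (((i - 1) ^ 3 - (i - 1) : ℤ) : ℂ) / 12 * c else 0) • w := by
    intro i k
    have h := congrArg (fun T : Module.End ℂ M => T w) (hω i k)
    simp only [LinearMap.sub_apply, Module.End.mul_apply, LinearMap.add_apply,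
      LinearMap.smul_apply, Module.End.one_apply] at h
    rw [sub_eq_iff_eq_add] at h
    rw [h]
    abel
  have hJωmem : ∀ cc jj : ℤ, n + 1 ≤ jj → n + 1 ≤ cc + jj - 1 → J jj (ω cc w) ∈ S := by
    intro cc jj h1 h2
    rw [hJωcomm]
    exact S.sub_mem (hωmem _ _ (hJmem _ h1)) (S.smul_mem _ (hJmem _ h2))
  have hJωωmem : ∀ a b jj : ℤ, n + 1 ≤ jj → n + 1 ≤ a + jj - 1 → n + 1 ≤ b + jj - 1 →
      n + 1 ≤ a + b + jj - 2 → J jj (ω b (ω a w)) ∈ S := by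
    intro a b jj h1 h2 h3 h4
    rw [hJωcomm b jj]
    refine S.sub_mem (hωmem _ _ (hJωmem a jj h1 h2))
      (S.smul_mem _ (hJωmem a (b + jj - 1) h3 (by omega)))
  have hJw0 : ∀ jj : ℤ, N₀ ≤ jj → J jj w = 0 := fun jj h => (hN jj h).2
  have hJω0 : ∀ cc jj : ℤ, 0 ≤ cc → N₀ + 1 ≤ jj → J jj (ω cc w) = 0 := by
    intro cc jj h0 h1
    rw [hJωcomm, hJw0 jj (by omega), hJw0 (cc + jj - 1) (by omega)]
    simp
  have hωω0 : ∀ i k : ℤ, s + 2 ≤ i → 0 ≤ k → ω i (ω k w) = 0 := by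
    intro i k hi hk
    rw [hωωapp i k, hwv i (by omega), hwv (i + k - 1) (by omega),
      if_neg (by omega : ¬ i + k = 2)]
    simp
  set lo : ℤ := min (n + s - N₀ - 1) (-1) with hlodef
  have hlo1 : lo ≤ n + s - N₀ - 1 := min_le_left _ _
  have hlo2 : lo ≤ -1 := min_le_right _ _
  set B : Finset (ℤ × ℤ) := Finset.Icc lo (s + 1) ×ˢ Finset.Icc lo (s + 1) with hBdef
  -- vanishing outside the box
  have hFv0 : ∀ q : ℤ × ℤ, q ∉ B → fvec ω J n s w q = 0 := by
    rintro ⟨a, b⟩ hq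
    have hq' : a < lo ∨ s + 1 < a ∨ b < lo ∨ s + 1 < b := by
      by_contra hcon
      push_neg at hcon
      exact hq (by simp only [hBdef, Finset.mem_product, Finset.mem_Icc]; omega)
    rcases lt_or_ge a 0 with ha0 | ha0 <;> rcases lt_or_ge b 0 with hb0 | hb0
    · have e : fvec ω J n s w (a, b) = ω a (ω b (J (n + 2 * s - a - b) w)) := by
        simp [fvec, ha0, hb0]
      rw [e, hJw0 (n + 2 * s - a - b) (by omega), map_zero, map_zero]
    · have e : fvec ω J n s w (a, b) = ω a (J (n + 2 * s - a - b) (ω b w)) := by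
        simp [fvec, ha0, hb0, not_lt.mpr hb0]
      rw [e]
      by_cases hb : s < b
      · rw [hwv b hb, map_zero, map_zero]
      · rw [hJω0 b _ (by omega) (by omega), map_zero]
    · have e : fvec ω J n s w (a, b) = ω b (J (n + 2 * s - a - b) (ω a w)) := by
        simp [fvec, not_lt.mpr ha0, hb0]
      rw [e]
      by_cases ha : s < a
      · rw [hwv a ha, map_zero, map_zero]
      · rw [hJω0 a _ (by omega) (by omega), map_zero]
    · have e : fvec ω J n s w (a, b) = J (n + 2 * s - a - b) (ω b (ω a w)) := by
        simp [fvec, not_lt.mpr ha0, not_lt.mpr hb0]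
      rw [e]
      by_cases ha : s < a
      · rw [hwv a ha, map_zero, map_zero]
      · rw [hωω0 b a (by omega) (by omega), map_zero]
  -- the two triple modes as finite sums
  have key1 : tripleMode ω J 1 1 2 (n + 2 * s + 3) w =
      ∑ q ∈ B, ((-(n + 2 * s - q.1 - q.2) - 1 : ℤ) : ℂ) • fvec ω J n s w q := by
    simp only [tripleMode]
    refine Eq.trans (finsum_congr ?_) (finsum_eq_sum_of_support_subset _ ?_)
    · intro q
      have e : n + 2 * s + 3 + 1 - ((1 : ℕ) : ℤ) - ((1 : ℕ) : ℤ) - ((2 : ℕ) : ℤ) - q.1 - q.2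
          = n + 2 * s - q.1 - q.2 := by push_cast; ring
      rw [e]
      simp only [fvec]
      norm_num [zbinom_zero', zbinom_one']
    · intro q hq
      simp only [Function.mem_support] at hq
      by_contra hqB
      exact hq (by rw [hFv0 q (by simpa using hqB), smul_zero])
  have key2 : tripleMode ω J 2 1 1 (n + 2 * s + 3) w =
      ∑ q ∈ B, ((-q.1 - 1 : ℤ) : ℂ) • fvec ω J n s w q := by
    simp only [tripleMode]
    refine Eq.trans (finsum_congr ?_) (finsum_eq_sum_of_support_subset _ ?_)
    · intro q
      have e : n + 2 * s + 3 + 1 - ((2 : ℕ) : ℤ) - ((1 : ℕ) : ℤ) - ((1 : ℕ) : ℤ) - q.1 - q.2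
          = n + 2 * s - q.1 - q.2 := by push_cast; ring
      rw [e]
      simp only [fvec]
      norm_num [zbinom_zero', zbinom_one']
    · intro q hq
      simp only [Function.mem_support] at hq
      by_contra hqB
      exact hq (by rw [hFv0 q (by simpa using hqB), smul_zero])
  have key : tripleMode ω J 1 1 2 (n + 2 * s + 3) w -
      (2 : ℂ) • tripleMode ω J 2 1 1 (n + 2 * s + 3) w =
      ∑ q ∈ B, ((((-(n + 2 * s - q.1 - q.2) - 1 : ℤ) : ℂ) - 2 * ((-q.1 - 1 : ℤ) : ℂ)) •
        fvec ω J n s w q) := by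
    rw [key1, key2, Finset.smul_sum, ← Finset.sum_sub_distrib]
    refine Finset.sum_congr rfl fun q _ => ?_
    rw [smul_smul, ← sub_smul]
  have hss : ((s, s) : ℤ × ℤ) ∈ B := by
    simp only [hBdef, Finset.mem_product, Finset.mem_Icc]
    omega
  have main : (∑ q ∈ B, ((((-(n + 2 * s - q.1 - q.2) - 1 : ℤ) : ℂ) -
        2 * ((-q.1 - 1 : ℤ) : ℂ)) • fvec ω J n s w q)) =
      (((-n + 2 * s + 1 : ℤ) : ℂ) * lam ^ 2) • J n w +
        ∑ q ∈ B.erase (s, s), ((((-(n + 2 * s - q.1 - q.2) - 1 : ℤ) : ℂ) -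
          2 * ((-q.1 - 1 : ℤ) : ℂ)) • fvec ω J n s w q) := by
    rw [← Finset.add_sum_erase B _ hss]
    congr 1
    show ((((-(n + 2 * s - s - s) - 1 : ℤ) : ℂ) - 2 * ((-s - 1 : ℤ) : ℂ)) •
      fvec ω J n s w (s, s)) = _
    have hFvss : fvec ω J n s w (s, s) = (lam * lam) • J n w := by
      have e : fvec ω J n s w (s, s) = J (n + 2 * s - s - s) (ω s (ω s w)) := by
        simp only [fvec]
        rw [if_neg (by omega), if_neg (by omega), if_neg (by omega)]
      rw [e, show n + 2 * s - s - s = n by ring, hωs, map_smul, hωs, map_smul, map_smul,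
        smul_smul]
    rw [hFvss, smul_smul]
    congr 1
    push_cast
    ring
  -- membership of each remaining term
  have hFvmem : ∀ q ∈ B.erase ((s, s) : ℤ × ℤ),
      ((((-(n + 2 * s - q.1 - q.2) - 1 : ℤ) : ℂ) - 2 * ((-q.1 - 1 : ℤ) : ℂ)) •
        fvec ω J n s w q) ∈ S := by
    rintro ⟨a, b⟩ hq
    refine S.smul_mem _ ?_
    have hab : ((a, b) : ℤ × ℤ) ≠ (s, s) := (Finset.mem_erase.mp hq).1
    have h2 := (Finset.mem_erase.mp hq).2
    simp only [hBdef, Finset.mem_product, Finset.mem_Icc] at h2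
    have hne : a ≠ s ∨ b ≠ s := by
      by_contra hcc
      push_neg at hcc
      exact hab (by rw [hcc.1, hcc.2])
    rcases lt_or_ge a 0 with ha0 | ha0 <;> rcases lt_or_ge b 0 with hb0 | hb0
    · have e : fvec ω J n s w (a, b) = ω a (ω b (J (n + 2 * s - a - b) w)) := by
        simp [fvec, ha0, hb0]
      rw [e]
      exact hωmem _ _ (hωmem _ _ (hJmem _ (by omega)))
    · have e : fvec ω J n s w (a, b) = ω a (J (n + 2 * s - a - b) (ω b w)) := by
        simp [fvec, ha0, not_lt.mpr hb0]
      rw [e]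
      by_cases hb : s < b
      · rw [hwv b hb, map_zero, map_zero]; exact S.zero_mem
      · exact hωmem _ _ (hJωmem b _ (by omega) (by omega))
    · have e : fvec ω J n s w (a, b) = ω b (J (n + 2 * s - a - b) (ω a w)) := by
        simp [fvec, not_lt.mpr ha0, hb0]
      rw [e]
      by_cases ha : s < a
      · rw [hwv a ha, map_zero, map_zero]; exact S.zero_mem
      · exact hωmem _ _ (hJωmem a _ (by omega) (by omega))
    · have e : fvec ω J n s w (a, b) = J (n + 2 * s - a - b) (ω b (ω a w)) := by
        simp [fvec, not_lt.mpr ha0, not_lt.mpr hb0]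
      rw [e]
      by_cases ha : s < a
      · rw [hwv a ha, map_zero, map_zero]; exact S.zero_mem
      by_cases hb : s < b
      · -- here b = s + 1 and 0 ≤ a ≤ s
        rw [hωωapp b a, hwv b (by omega), if_neg (by omega : ¬ b + a = 2)]
        by_cases ha' : a = 0
        · subst ha'
          rw [show b + 0 - 1 = s by omega, hωs]
          simp only [map_zero, zero_smul, zero_add, add_zero, map_smul, smul_smul]
          exact S.smul_mem _ (hJmem _ (by omega))
        · rw [hwv (b + a - 1) (by omega)]
          simp only [map_zero, smul_zero, zero_smul, zero_add, add_zero]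
          exact S.zero_mem
      · exact hJωωmem a b _ (by omega) (by omega) (by omega) (by omega)
  rw [key, main, add_sub_cancel_left]
  exact S.sum_mem hFvmem
end
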